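/- arXiv:2204.06602 — 13 statements merged into one kernel-verified Lean document; each statement's English description precedes it below -/
import Mathlib

section
/- Let f : (0,∞) → [0,∞) be infinitely differentiable and completely increasing, i.e. (−1)^k f^(k)(x) ≤ 0 for every x ∈ (0,∞) and every integer k ≥ 1. Let n ≥ 1 be an integer and let x_1, …, x_n ∈ (0,∞) be pairwise distinct, with m = min_i x_i and M = max_i x_i. Then for all real numbers a, b with 0 < a ≤ m and M ≤ b, one has ((−1)^(n−1)/(n−1)!) f^(n−1)(a) ≤ Σ_{i=1}^n f(x_i) / Π_{j≠i} (x_j − x_i) ≤ ((−1)^(n−1)/(n−1)!) f^(n−1)(b). -/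
open Set Filter Topology Finset

private lemma iteratedDeriv_congr_open {U : Set ℝ} (hU : IsOpen U) {g h : ℝ → ℝ}
    (hgh : Set.EqOn g h U) {t : ℝ} (ht : t ∈ U) (k : ℕ) :
    iteratedDeriv k g t = iteratedDeriv k h t := by
  have e1 := iteratedFDerivWithin_of_isOpen (𝕜 := ℝ) (f := g) k hU ht
  have e2 := iteratedFDerivWithin_of_isOpen (𝕜 := ℝ) (f := h) k hU ht
  rw [iteratedDeriv_eq_iteratedFDeriv, iteratedDeriv_eq_iteratedFDeriv, ← e1, ← e2,
    iteratedFDerivWithin_congr hgh ht]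

private lemma contDiff_polyeval (q : Polynomial ℝ) :
    ContDiff ℝ (⊤ : ℕ∞) fun s : ℝ => Polynomial.eval s q := by
  induction q using Polynomial.induction_on' with
  | add p q hp hq => simpa [Polynomial.eval_add] using hp.add hq
  | monomial k c => simpa [Polynomial.eval_monomial] using contDiff_const.mul (contDiff_id.pow k)

private lemma iteratedDeriv_polyeval (k : ℕ) : ∀ (q : Polynomial ℝ) (t : ℝ),
    iteratedDeriv k (fun s => Polynomial.eval s q) t
      = Polynomial.eval t (Polynomial.derivative^[k] q) := by
  induction k with
  | zero => intro q t; simp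
  | succ k ih =>
    intro q t
    rw [iteratedDeriv_succ']
    have hd : deriv (fun s => Polynomial.eval s q)
        = fun s => Polynomial.eval s (Polynomial.derivative q) :=
      funext fun s => Polynomial.deriv q
    rw [hd, ih, Function.iterate_succ_apply]

private lemma contDiffOn_iteratedDeriv_open {U : Set ℝ} (hU : IsOpen U) (k : ℕ) :
    ∀ g : ℝ → ℝ, ContDiffOn ℝ (⊤ : ℕ∞) g U → ContDiffOn ℝ (⊤ : ℕ∞) (iteratedDeriv k g) U := by
  induction k with
  | zero => intro g hg; simpa [iteratedDeriv_zero] using hg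
  | succ k ih =>
    intro g hg
    rw [iteratedDeriv_succ']
    exact ih _ (hg.deriv_of_isOpen hU (by simp))

private lemma iteratedDeriv_sub_polyeval {U : Set ℝ} (hU : IsOpen U) (k : ℕ) :
    ∀ (g : ℝ → ℝ), ContDiffOn ℝ (⊤ : ℕ∞) g U → ∀ (q : Polynomial ℝ) {t : ℝ}, t ∈ U →
    iteratedDeriv k (fun s => g s - Polynomial.eval s q) t
      = iteratedDeriv k g t - iteratedDeriv k (fun s => Polynomial.eval s q) t := by
  induction k with
  | zero => intro g _ q t _; simp
  | succ k ih =>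
    intro g hg q t ht
    have hg' : ContDiffOn ℝ (⊤ : ℕ∞) (deriv g) U := hg.deriv_of_isOpen hU (by simp)
    have heq : Set.EqOn (deriv (fun s => g s - Polynomial.eval s q))
        (fun s => deriv g s - Polynomial.eval s (Polynomial.derivative q)) U := by
      intro u hu
      have hdg : DifferentiableAt ℝ g u :=
        (hg.differentiableOn (by simp)).differentiableAt (hU.mem_nhds hu)
      have hdq : DifferentiableAt ℝ (fun s => Polynomial.eval s q) u :=
        q.differentiableAt
      rw [deriv_fun_sub hdg hdq, Polynomial.deriv q]
    have hd : deriv (fun s => Polynomial.eval s q)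
        = fun s => Polynomial.eval s (Polynomial.derivative q) :=
      funext fun s => Polynomial.deriv q
    rw [iteratedDeriv_succ', iteratedDeriv_succ', iteratedDeriv_succ',
      iteratedDeriv_congr_open hU heq ht, hd]
    exact ih (deriv g) hg' (Polynomial.derivative q) ht

private lemma iter_rolle (m : ℕ) : ∀ (g : ℝ → ℝ), ContDiffOn ℝ (⊤ : ℕ∞) g (Set.Ioi 0) →
    ∀ (y : ℕ → ℝ), 0 < y 0 → (∀ i j, i < j → j ≤ m → y i < y j) → (∀ i ≤ m, g (y i) = 0) →
    ∃ ξ, y 0 ≤ ξ ∧ ξ ≤ y m ∧ iteratedDeriv m g ξ = 0 := by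
  induction m with
  | zero =>
    intro g _ y _ _ hz
    exact ⟨y 0, le_rfl, le_rfl, by simpa using hz 0 le_rfl⟩
  | succ k ih =>
    intro g hg y hy0 hmono hz
    classical
    have hpos : ∀ i, i ≤ k + 1 → 0 < y i := by
      intro i hi
      rcases Nat.eq_zero_or_pos i with h | h
      · simpa [h] using hy0
      · exact hy0.trans (hmono 0 i h hi)
    have H : ∀ i, i ≤ k → ∃ c, y i < c ∧ c < y (i + 1) ∧ deriv g c = 0 := by
      intro i hi
      have hab : y i < y (i + 1) := hmono i (i + 1) (Nat.lt_succ_self i) (by omega)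
      have hsub : Set.Icc (y i) (y (i + 1)) ⊆ Set.Ioi 0 := fun t htc =>
        lt_of_lt_of_le (hpos i (by omega)) htc.1
      have hcont : ContinuousOn g (Set.Icc (y i) (y (i + 1))) := hg.continuousOn.mono hsub
      obtain ⟨c, hc, hc0⟩ := exists_deriv_eq_zero hab hcont
        ((hz i (by omega)).trans (hz (i + 1) (by omega)).symm)
      exact ⟨c, hc.1, hc.2, hc0⟩
    set c : ℕ → ℝ := fun i => if h : i ≤ k then (H i h).choose else 0 with hc
    have hcp : ∀ i, i ≤ k → y i < c i ∧ c i < y (i + 1) ∧ deriv g (c i) = 0 := by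
      intro i h
      simp only [hc, dif_pos h]
      exact (H i h).choose_spec
    have hg' : ContDiffOn ℝ (⊤ : ℕ∞) (deriv g) (Set.Ioi 0) :=
      hg.deriv_of_isOpen isOpen_Ioi (by simp)
    obtain ⟨ξ, h1, h2, h3⟩ := ih (deriv g) hg' c
      (hy0.trans (hcp 0 (Nat.zero_le k)).1)
      (by
        intro i j hij hjk
        have ha1 := (hcp i (by omega)).2.1
        have ha2 := (hcp j hjk).1
        have hstep : y (i + 1) ≤ y j := by
          rcases eq_or_lt_of_le (Nat.succ_le_of_lt hij) with h | h
          · exact le_of_eq (congrArg y h)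
          · exact le_of_lt (hmono (i + 1) j h (by omega))
        linarith)
      (fun i hi => (hcp i hi).2.2)
    refine ⟨ξ, ?_, ?_, ?_⟩
    · exact le_of_lt (lt_of_lt_of_le (hcp 0 (Nat.zero_le k)).1 h1)
    · exact h2.trans (le_of_lt (hcp k le_rfl).2.1)
    · rw [iteratedDeriv_succ']; exact h3

theorem completely_increasing_divided_difference_bounds (f : ℝ → ℝ)
    (hf : ContDiffOn ℝ (⊤ : ℕ∞) f (Set.Ioi 0))
    (hnonneg : ∀ x ∈ Set.Ioi (0 : ℝ), 0 ≤ f x)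
    (hmono : ∀ k : ℕ, 1 ≤ k → ∀ x ∈ Set.Ioi (0 : ℝ),
      (-1 : ℝ) ^ k * iteratedDeriv k f x ≤ 0)
    (n : ℕ) (hn : 1 ≤ n) (x : Fin n → ℝ) (hx : ∀ i, x i ∈ Set.Ioi (0 : ℝ))
    (hinj : Function.Injective x)
    (a b : ℝ) (ha : 0 < a) (ham : ∀ i, a ≤ x i) (hbM : ∀ i, x i ≤ b) :
    (-1 : ℝ) ^ (n - 1) / (n - 1).factorial * iteratedDeriv (n - 1) f a ≤
      ∑ i, f (x i) / ∏ j ∈ Finset.univ.erase i, (x j - x i) ∧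
    ∑ i, f (x i) / ∏ j ∈ Finset.univ.erase i, (x j - x i) ≤
      (-1 : ℝ) ^ (n - 1) / (n - 1).factorial * iteratedDeriv (n - 1) f b := by
  classical
  have hf' : ContDiffOn ℝ (⊤ : ℕ∞) f (Set.Ioi 0) := hf.of_le (by simp)
  set k := n - 1 with hk
  have hkn : k < n := by omega
  have hksucc : k + 1 = n := by omega
  set p : Polynomial ℝ := Lagrange.interpolate Finset.univ x (fun i => f (x i)) with hp
  have hinjOn : Set.InjOn x ↑(Finset.univ : Finset (Fin n)) := Function.Injective.injOn hinj
  -- natDegree bound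
  have hdeg : p.degree < (n : ℕ) := by
    have := Lagrange.degree_interpolate_lt (fun i => f (x i)) hinjOn
    simpa [hp] using this
  have hnat : p.natDegree ≤ k := by
    by_cases hp0 : p = 0
    · simp [hp0]
    · have := (Polynomial.natDegree_lt_iff_degree_lt hp0).mpr hdeg
      omega
  -- leading coefficient
  have hcoeff : p.coeff k = ∑ i, f (x i) * (∏ j ∈ Finset.univ.erase i, (x i - x j))⁻¹ := by
    rw [hp, Lagrange.interpolate_apply, Polynomial.finset_sum_coeff]
    refine Finset.sum_congr rfl fun i _ => ?_
    rw [Polynomial.coeff_C_mul]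
    congr 1
    have hcard : (Finset.univ.erase i).card = k := by
      rw [Finset.card_erase_of_mem (Finset.mem_univ i), Finset.card_univ, Fintype.card_fin]
    have hbasis : Lagrange.basis Finset.univ x i
        = Polynomial.C (∏ j ∈ Finset.univ.erase i, (x i - x j)⁻¹)
          * ∏ j ∈ Finset.univ.erase i, (Polynomial.X - Polynomial.C (x j)) := by
      rw [Lagrange.basis]
      simp only [Lagrange.basisDivisor]
      rw [Finset.prod_mul_distrib, map_prod]
    have hqmonic : (∏ j ∈ Finset.univ.erase i,
        (Polynomial.X - Polynomial.C (x j))).Monic :=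
      Polynomial.monic_prod_of_monic _ _ fun j _ => Polynomial.monic_X_sub_C (x j)
    have hqdeg : (∏ j ∈ Finset.univ.erase i,
        (Polynomial.X - Polynomial.C (x j))).natDegree = k := by
      rw [Polynomial.natDegree_prod_of_monic _ _ fun j _ => Polynomial.monic_X_sub_C (x j)]
      simp [Polynomial.natDegree_X_sub_C, hcard]
    rw [hbasis, Polynomial.coeff_C_mul, ← hqdeg, hqmonic.coeff_natDegree, mul_one]
    exact Finset.prod_inv_distrib _
  -- relation between the sum and the leading coefficient
  set S := ∑ i, f (x i) / ∏ j ∈ Finset.univ.erase i, (x j - x i) with hS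
  have hSc : S = (-1 : ℝ) ^ k * p.coeff k := by
    rw [hS, hcoeff, Finset.mul_sum]
    refine Finset.sum_congr rfl fun i _ => ?_
    have hcard : (Finset.univ.erase i).card = k := by
      rw [Finset.card_erase_of_mem (Finset.mem_univ i), Finset.card_univ, Fintype.card_fin]
    have hflip : ∏ j ∈ Finset.univ.erase i, (x j - x i)
        = (-1 : ℝ) ^ k * ∏ j ∈ Finset.univ.erase i, (x i - x j) := by
      rw [← hcard, ← Finset.prod_const (-1 : ℝ), ← Finset.prod_mul_distrib]
      exact Finset.prod_congr rfl fun j _ => by ring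
    have hinv : ((-1 : ℝ) ^ k)⁻¹ = (-1 : ℝ) ^ k := by
      rw [← inv_pow]; norm_num
    rw [hflip, div_eq_mul_inv, mul_inv, hinv]
    ring
  -- the auxiliary function g vanishes at the nodes
  have hgz : ∀ i, f (x i) - Polynomial.eval (x i) p = 0 := by
    intro i
    rw [hp, Lagrange.eval_interpolate_at_node (fun i => f (x i)) hinjOn (Finset.mem_univ i)]
    ring
  have hg : ContDiffOn ℝ (⊤ : ℕ∞) (fun t => f t - Polynomial.eval t p) (Set.Ioi 0) :=
    hf'.sub ((contDiff_polyeval p).contDiffOn)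
  -- sorted nodes
  set σ := Tuple.sort x with hσ
  have hxs : StrictMono (x ∘ σ) :=
    (Tuple.monotone_sort x).strictMono_of_injective (hinj.comp σ.injective)
  set y : ℕ → ℝ := fun i => (x ∘ σ) ⟨min i k, lt_of_le_of_lt (min_le_right i k) hkn⟩ with hy
  have hyi : ∀ i, ∃ j, y i = x j := fun i => ⟨σ _, rfl⟩
  have hya : ∀ i, a ≤ y i := by
    intro i; obtain ⟨j, hj⟩ := hyi i; rw [hj]; exact ham j
  have hyb : ∀ i, y i ≤ b := by
    intro i; obtain ⟨j, hj⟩ := hyi i; rw [hj]; exact hbM j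
  have hy0 : 0 < y 0 := lt_of_lt_of_le ha (hya 0)
  have hymono : ∀ i j, i < j → j ≤ k → y i < y j := by
    intro i j hij hjk
    apply hxs
    have h1 : min i k = i := min_eq_left (by omega)
    have h2 : min j k = j := min_eq_left hjk
    simp only [hy, Fin.mk_lt_mk, h1, h2]
    exact hij
  -- apply iterated Rolle
  obtain ⟨ξ, hξ1, hξ2, hξ0⟩ := iter_rolle k (fun t => f t - Polynomial.eval t p) hg y hy0
    hymono (fun i _ => hgz _)
  have haξ : a ≤ ξ := le_trans (hya 0) hξ1
  have hξb : ξ ≤ b := le_trans hξ2 (hyb k)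
  have hξ0' : ξ ∈ Set.Ioi (0 : ℝ) := lt_of_lt_of_le ha haξ
  -- the value of the (n-1)-st derivative at ξ
  have hq0 : Polynomial.derivative^[k] p
      = Polynomial.C ((k.factorial : ℝ) * p.coeff k) := by
    have h1 : (Polynomial.derivative^[k] p).natDegree ≤ 0 :=
      le_trans (Polynomial.natDegree_iterate_derivative p k) (by omega)
    rw [Polynomial.eq_C_of_natDegree_le_zero h1, Polynomial.coeff_iterate_derivative]
    congr 1
    rw [zero_add, Nat.descFactorial_self]
    simp [nsmul_eq_mul]
  have hfξ : iteratedDeriv k f ξ = (k.factorial : ℝ) * p.coeff k := by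
    have hsub := iteratedDeriv_sub_polyeval isOpen_Ioi k f hf' p hξ0'
    rw [hξ0] at hsub
    have hpoly := iteratedDeriv_polyeval k p ξ
    rw [hq0, Polynomial.eval_C] at hpoly
    rw [hpoly] at hsub
    linarith
  -- monotonicity of t ↦ (-1)^k * f^(k)(t)
  have hab : a ≤ b := le_trans (ham ⟨0, hn⟩) (hbM ⟨0, hn⟩)
  have hIccsub : Set.Icc a b ⊆ Set.Ioi 0 := fun t ht => lt_of_lt_of_le ha ht.1
  have hcd : ContDiffOn ℝ (⊤ : ℕ∞) (iteratedDeriv k f) (Set.Ioi 0) :=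
    contDiffOn_iteratedDeriv_open isOpen_Ioi k f hf'
  have hdiff : ∀ t ∈ Set.Ioi (0 : ℝ), DifferentiableAt ℝ (iteratedDeriv k f) t := fun t ht =>
    (hcd.differentiableOn (by simp)).differentiableAt (isOpen_Ioi.mem_nhds ht)
  have hmOn : MonotoneOn (fun t => (-1 : ℝ) ^ k * iteratedDeriv k f t) (Set.Icc a b) := by
    apply monotoneOn_of_deriv_nonneg (convex_Icc a b)
    · exact continuousOn_const.mul (hcd.continuousOn.mono hIccsub)
    · rw [interior_Icc]
      intro t ht
      have ht0 : t ∈ Set.Ioi (0 : ℝ) := lt_of_lt_of_le ha (le_of_lt ht.1)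
      exact ((hdiff t ht0).const_mul _).differentiableWithinAt
    · rw [interior_Icc]
      intro t ht
      have ht0 : t ∈ Set.Ioi (0 : ℝ) := lt_of_lt_of_le ha (le_of_lt ht.1)
      rw [deriv_const_mul _ (hdiff t ht0), ← iteratedDeriv_succ, hksucc]
      have hs := hmono n hn t ht0
      have hsign : (-1 : ℝ) ^ n = -(-1 : ℝ) ^ k := by
        rw [← hksucc, pow_succ]; ring
      rw [hsign] at hs
      nlinarith
  have hmem_a : a ∈ Set.Icc a b := ⟨le_rfl, hab⟩
  have hmem_b : b ∈ Set.Icc a b := ⟨hab, le_rfl⟩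
  have hmem_ξ : ξ ∈ Set.Icc a b := ⟨haξ, hξb⟩
  have hha := hmOn hmem_a hmem_ξ haξ
  have hhb := hmOn hmem_ξ hmem_b hξb
  simp only at hha hhb
  have hfacpos : (0 : ℝ) < (k.factorial : ℝ) := by positivity
  have hξval : (-1 : ℝ) ^ k * iteratedDeriv k f ξ = S * (k.factorial : ℝ) := by
    rw [hfξ, hSc]; ring
  constructor
  · rw [div_mul_eq_mul_div, div_le_iff₀ hfacpos]
    rw [hξval] at hha
    linarith
  · rw [div_mul_eq_mul_div, le_div_iff₀ hfacpos]
    rw [hξval] at hhb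
    linarith
end

section
/- Let f : (0,∞) → [0,∞) be infinitely differentiable and completely decreasing, i.e. (−1)^k f^(k)(x) ≥ 0 for every x ∈ (0,∞) and every integer k ≥ 1. Let n ≥ 1 be an integer and let x_1, …, x_n ∈ (0,∞) be pairwise distinct, with m = min_i x_i and M = max_i x_i. Then for all real numbers a, b with 0 < a ≤ m and M ≤ b, one has ((−1)^(n−1)/(n−1)!) f^(n−1)(b) ≤ Σ_{i=1}^n f(x_i) / Π_{j≠i} (x_j − x_i) ≤ ((−1)^(n−1)/(n−1)!) f^(n−1)(a). -/
open Set Filter Topology Finset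

private lemma aux_diff_iter (f : ℝ → ℝ) (hf : ContDiffOn ℝ (⊤ : ℕ∞) f (Set.Ioi 0)) (k : ℕ) :
    ∀ t ∈ Set.Ioi (0 : ℝ), DifferentiableAt ℝ (iteratedDeriv k f) t := by
  intro t ht
  have hopen : IsOpen (Set.Ioi (0 : ℝ)) := isOpen_Ioi
  have hEq : Set.EqOn (iteratedDerivWithin k f (Set.Ioi 0)) (iteratedDeriv k f) (Set.Ioi 0) := by
    intro s hs
    rw [iteratedDerivWithin_eq_iteratedFDerivWithin, iteratedDeriv_eq_iteratedFDeriv,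
      iteratedFDerivWithin_of_isOpen k hopen hs]
  have hdo : DifferentiableOn ℝ (iteratedDerivWithin k f (Set.Ioi 0)) (Set.Ioi 0) :=
    hf.differentiableOn_iteratedDerivWithin (by exact_mod_cast lt_top_iff_ne_top.2 (by simp))
      hopen.uniqueDiffOn
  have h1 : DifferentiableAt ℝ (iteratedDerivWithin k f (Set.Ioi 0)) t :=
    (hdo t ht).differentiableAt (hopen.mem_nhds ht)
  have hev : iteratedDerivWithin k f (Set.Ioi 0) =ᶠ[nhds t] iteratedDeriv k f := by
    filter_upwards [hopen.mem_nhds ht] with s hs using hEq hs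
  exact hev.differentiableAt_iff.mp h1

private lemma aux_rolle_iter :
    ∀ (k : ℕ) (g : ℝ → ℝ),
      (∀ j : ℕ, ∀ t ∈ Set.Ioi (0 : ℝ), DifferentiableAt ℝ (iteratedDeriv j g) t) →
      ∀ z : Fin (k + 1) → ℝ, StrictMono z → (∀ i, z i ∈ Set.Ioi (0 : ℝ)) →
      (∀ i, g (z i) = 0) →
      ∃ ξ ∈ Set.Icc (z 0) (z (Fin.last k)), iteratedDeriv k g ξ = 0 := by
  intro k
  induction k with
  | zero =>
    intro g hg z hm hz h0
    exact ⟨z 0, ⟨le_refl _, le_refl _⟩, by simpa using h0 0⟩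
  | succ k ih =>
    intro g hg z hm hz h0
    have key : ∀ i : Fin (k + 1), ∃ c ∈ Set.Ioo (z i.castSucc) (z i.succ), deriv g c = 0 := by
      intro i
      have hlt : z i.castSucc < z i.succ := hm Fin.castSucc_lt_succ
      have hcont : ContinuousOn g (Set.Icc (z i.castSucc) (z i.succ)) := by
        intro t ht
        have htpos : t ∈ Set.Ioi (0 : ℝ) := lt_of_lt_of_le (hz i.castSucc) ht.1
        have := hg 0 t htpos
        rw [iteratedDeriv_zero] at this
        exact this.continuousAt.continuousWithinAt
      exact exists_deriv_eq_zero hlt hcont (by rw [h0, h0])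
    choose w hw1 hw2 using key
    have hwpos : ∀ i, w i ∈ Set.Ioi (0 : ℝ) := fun i => lt_trans (hz i.castSucc) (hw1 i).1
    have hwmono : StrictMono w := by
      intro i j hij
      have h1 : (i.succ : Fin (k + 2)) ≤ j.castSucc := by
        rw [Fin.le_def]
        have := Fin.lt_def.mp hij
        simp only [Fin.val_succ, Fin.coe_castSucc]
        omega
      calc w i < z i.succ := (hw1 i).2
        _ ≤ z j.castSucc := hm.monotone h1
        _ < w j := (hw1 j).1
    have hg' : ∀ j : ℕ, ∀ t ∈ Set.Ioi (0 : ℝ), DifferentiableAt ℝ (iteratedDeriv j (deriv g)) t := by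
      intro j t ht
      rw [← iteratedDeriv_succ']
      exact hg (j + 1) t ht
    obtain ⟨ξ, hξ, hξ0⟩ := ih (deriv g) hg' w hwmono hwpos hw2
    refine ⟨ξ, ⟨?_, ?_⟩, ?_⟩
    · refine le_trans (le_of_lt ?_) hξ.1
      have := (hw1 0).1
      simpa using this
    · refine le_trans hξ.2 (le_of_lt ?_)
      have := (hw1 (Fin.last k)).2
      simpa [Fin.succ_last] using this
    · rw [iteratedDeriv_succ']
      exact hξ0

private lemma aux_poly_iteratedDeriv (p : Polynomial ℝ) (k : ℕ) :
    iteratedDeriv k (fun t => p.eval t) = fun t => (Polynomial.derivative^[k] p).eval t := by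
  induction k with
  | zero => simp
  | succ k ih =>
    funext t
    rw [iteratedDeriv_succ, ih]
    rw [Function.iterate_succ_apply']
    exact Polynomial.deriv _

private lemma aux_iteratedDeriv_sub_poly (f : ℝ → ℝ)
    (hd : ∀ k : ℕ, ∀ t ∈ Set.Ioi (0 : ℝ), DifferentiableAt ℝ (iteratedDeriv k f) t)
    (p : Polynomial ℝ) (k : ℕ) :
    ∀ t ∈ Set.Ioi (0 : ℝ), iteratedDeriv k (fun s => f s - p.eval s) t
      = iteratedDeriv k f t - (Polynomial.derivative^[k] p).eval t := by
  induction k with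
  | zero => intro t _; simp
  | succ k ih =>
    intro t ht
    rw [iteratedDeriv_succ]
    have hev : iteratedDeriv k (fun s => f s - p.eval s) =ᶠ[nhds t]
        (fun s => iteratedDeriv k f s - (Polynomial.derivative^[k] p).eval s) := by
      filter_upwards [isOpen_Ioi.mem_nhds ht] with s hs using ih s hs
    rw [hev.deriv_eq, deriv_fun_sub (hd k t ht)
      ((Polynomial.differentiable _).differentiableAt)]
    rw [← iteratedDeriv_succ, Function.iterate_succ_apply', Polynomial.deriv]

private lemma aux_mean_value (f : ℝ → ℝ) (hf : ContDiffOn ℝ (⊤ : ℕ∞) f (Set.Ioi 0))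
    (m : ℕ) (x : Fin (m + 1) → ℝ) (hx : ∀ i, x i ∈ Set.Ioi (0 : ℝ))
    (hinj : Function.Injective x)
    (a b : ℝ) (ham : ∀ i, a ≤ x i) (hbM : ∀ i, x i ≤ b) :
    ∃ ξ, a ≤ ξ ∧ ξ ≤ b ∧ 0 < ξ ∧
      iteratedDeriv m f ξ = (m.factorial : ℝ) *
        ∑ i, f (x i) / ∏ j ∈ Finset.univ.erase i, (x i - x j) := by
  classical
  set c : Fin (m + 1) → ℝ :=
    fun i => f (x i) / ∏ j ∈ Finset.univ.erase i, (x i - x j) with hc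
  set Q : Fin (m + 1) → Polynomial ℝ :=
    fun i => ∏ j ∈ Finset.univ.erase i, (Polynomial.X - Polynomial.C (x j)) with hQ
  set P : Polynomial ℝ := ∑ i, Polynomial.C (c i) * Q i with hP
  have hQmonic : ∀ i, (Q i).Monic :=
    fun i => Polynomial.monic_prod_of_monic _ _ (fun j _ => Polynomial.monic_X_sub_C (x j))
  have hcard : ∀ i : Fin (m + 1), (Finset.univ.erase i).card = m := by
    intro i
    rw [Finset.card_erase_of_mem (Finset.mem_univ i)]
    simp
  have hQdeg : ∀ i, (Q i).natDegree = m := by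
    intro i
    rw [hQ]
    rw [Polynomial.natDegree_prod_of_monic _ _ (fun j _ => Polynomial.monic_X_sub_C (x j))]
    simp [Polynomial.natDegree_X_sub_C, hcard i]
  have hPdeg : P.natDegree ≤ m := by
    refine Polynomial.natDegree_sum_le_of_forall_le _ _ (fun i _ => ?_)
    refine le_trans (Polynomial.natDegree_mul_le) ?_
    simp [Polynomial.natDegree_C, hQdeg i]
  have hPcoeff : P.coeff m = ∑ i, c i := by
    rw [hP, Polynomial.finset_sum_coeff]
    refine Finset.sum_congr rfl (fun i _ => ?_)
    rw [Polynomial.coeff_C_mul]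
    have : (Q i).coeff m = 1 := by
      have := (hQmonic i).coeff_natDegree
      rwa [hQdeg i] at this
    rw [this, mul_one]
  have hPeval : ∀ t : ℝ, P.eval t = ∑ i, c i * ∏ j ∈ Finset.univ.erase i, (t - x j) := by
    intro t
    rw [hP, Polynomial.eval_finset_sum]
    refine Finset.sum_congr rfl (fun i _ => ?_)
    rw [Polynomial.eval_mul, Polynomial.eval_C, hQ, Polynomial.eval_prod]
    simp
  have heval : ∀ i₀, P.eval (x i₀) = f (x i₀) := by
    intro i₀
    rw [hPeval]
    rw [Finset.sum_eq_single i₀]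
    · have hne : ∏ j ∈ Finset.univ.erase i₀, (x i₀ - x j) ≠ 0 := by
        refine Finset.prod_ne_zero_iff.mpr (fun j hj => ?_)
        refine sub_ne_zero.mpr (fun hEq => ?_)
        exact (Finset.mem_erase.mp hj).1 (hinj hEq).symm
      rw [hc]
      exact div_mul_cancel₀ _ hne
    · intro i _ hii
      have hmem : i₀ ∈ Finset.univ.erase i := Finset.mem_erase.mpr ⟨(Ne.symm hii), Finset.mem_univ _⟩
      rw [Finset.prod_eq_zero hmem (by ring), mul_zero]
    · intro h
      exact absurd (Finset.mem_univ i₀) h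
  have hd := aux_diff_iter f hf
  set h : ℝ → ℝ := fun s => f s - P.eval s with hh
  have hdh : ∀ j : ℕ, ∀ t ∈ Set.Ioi (0 : ℝ), DifferentiableAt ℝ (iteratedDeriv j h) t := by
    intro j t ht
    have hev : (fun s => iteratedDeriv j f s - (Polynomial.derivative^[j] P).eval s)
        =ᶠ[nhds t] iteratedDeriv j h := by
      filter_upwards [isOpen_Ioi.mem_nhds ht] with s hs
      exact (aux_iteratedDeriv_sub_poly f hd P j s hs).symm
    exact hev.differentiableAt_iff.mp
      ((hd j t ht).sub ((Polynomial.differentiable _).differentiableAt))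
  -- sorted points
  set σ := Tuple.sort x with hσ
  set z : Fin (m + 1) → ℝ := x ∘ σ with hz
  have hzmono : StrictMono z :=
    (Tuple.monotone_sort x).strictMono_of_injective (hinj.comp σ.injective)
  have hzpos : ∀ i, z i ∈ Set.Ioi (0 : ℝ) := fun i => hx (σ i)
  have hzero : ∀ i, h (z i) = 0 := by
    intro i
    have hzi : z i = x (σ i) := rfl
    rw [hh]
    simp only
    rw [hzi, heval (σ i), sub_self]
  obtain ⟨ξ, hξmem, hξ0⟩ := aux_rolle_iter m h hdh z hzmono hzpos hzero
  have hξpos : 0 < ξ := lt_of_lt_of_le (hzpos 0) hξmem.1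
  have hξsub : iteratedDeriv m h ξ = iteratedDeriv m f ξ - (Polynomial.derivative^[m] P).eval ξ :=
    aux_iteratedDeriv_sub_poly f hd P m ξ hξpos
  have hconst : (Polynomial.derivative^[m] P) = Polynomial.C ((m.factorial : ℝ) * ∑ i, c i) := by
    have hd0 : (Polynomial.derivative^[m] P).natDegree ≤ 0 := by
      refine le_trans (Polynomial.natDegree_iterate_derivative P m) ?_
      omega
    rw [Polynomial.eq_C_of_natDegree_le_zero hd0]
    congr 1
    rw [Polynomial.coeff_iterate_derivative]
    simp only [zero_add]
    rw [Nat.descFactorial_self, hPcoeff, nsmul_eq_mul]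
  refine ⟨ξ, le_trans (ham (σ 0)) hξmem.1, le_trans hξmem.2 (hbM (σ (Fin.last m))), hξpos, ?_⟩
  have : iteratedDeriv m f ξ - (m.factorial : ℝ) * ∑ i, c i = 0 := by
    rw [← hξ0, hξsub, hconst, Polynomial.eval_C]
  linarith [this]

theorem completely_decreasing_divided_difference_bounds (f : ℝ → ℝ)
    (hf : ContDiffOn ℝ (⊤ : ℕ∞) f (Set.Ioi 0))
    (hnonneg : ∀ x ∈ Set.Ioi (0 : ℝ), 0 ≤ f x)
    (hmono : ∀ k : ℕ, 1 ≤ k → ∀ x ∈ Set.Ioi (0 : ℝ),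
      (-1 : ℝ) ^ k * iteratedDeriv k f x ≥ 0)
    (n : ℕ) (hn : 1 ≤ n) (x : Fin n → ℝ) (hx : ∀ i, x i ∈ Set.Ioi (0 : ℝ))
    (hinj : Function.Injective x)
    (a b : ℝ) (ha : 0 < a) (ham : ∀ i, a ≤ x i) (hbM : ∀ i, x i ≤ b) :
    (-1 : ℝ) ^ (n - 1) / (n - 1).factorial * iteratedDeriv (n - 1) f b ≤
      ∑ i, f (x i) / ∏ j ∈ Finset.univ.erase i, (x j - x i) ∧
    ∑ i, f (x i) / ∏ j ∈ Finset.univ.erase i, (x j - x i) ≤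
      (-1 : ℝ) ^ (n - 1) / (n - 1).factorial * iteratedDeriv (n - 1) f a := by
  obtain ⟨m, rfl⟩ : ∃ m, n = m + 1 := ⟨n - 1, by omega⟩
  simp only [Nat.add_sub_cancel]
  have hd := aux_diff_iter f hf
  -- rewrite the sum
  have hprod : ∀ i : Fin (m + 1), ∏ j ∈ Finset.univ.erase i, (x j - x i)
      = (-1 : ℝ) ^ m * ∏ j ∈ Finset.univ.erase i, (x i - x j) := by
    intro i
    have hcard : (Finset.univ.erase i).card = m := by
      rw [Finset.card_erase_of_mem (Finset.mem_univ i)]; simp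
    calc ∏ j ∈ Finset.univ.erase i, (x j - x i)
        = ∏ j ∈ Finset.univ.erase i, ((-1) * (x i - x j)) := by
          refine Finset.prod_congr rfl (fun j _ => ?_); ring
      _ = (-1 : ℝ) ^ m * ∏ j ∈ Finset.univ.erase i, (x i - x j) := by
          rw [Finset.prod_mul_distrib, Finset.prod_const, hcard]
  have hpowinv : ((-1 : ℝ) ^ m)⁻¹ = (-1 : ℝ) ^ m := by
    rw [← inv_pow, inv_neg, inv_one]
  have hSum : ∑ i, f (x i) / ∏ j ∈ Finset.univ.erase i, (x j - x i)
      = (-1 : ℝ) ^ m * ∑ i, f (x i) / ∏ j ∈ Finset.univ.erase i, (x i - x j) := by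
    rw [Finset.mul_sum]
    refine Finset.sum_congr rfl (fun i _ => ?_)
    rw [hprod i, div_mul_eq_div_div_swap, div_eq_mul_inv _ ((-1 : ℝ) ^ m), hpowinv, mul_comm]
  obtain ⟨ξ, haξ, hξb, hξpos, hξeq⟩ := aux_mean_value f hf m x hx hinj a b ham hbM
  have hbpos : (0 : ℝ) < b := lt_of_lt_of_le hξpos hξb
  -- antitone
  have hanti : AntitoneOn (fun t => (-1 : ℝ) ^ m * iteratedDeriv m f t) (Set.Ioi 0) := by
    refine antitoneOn_of_deriv_nonpos (convex_Ioi 0) ?_ ?_ ?_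
    · exact fun t ht => ((hd m t ht).const_mul _).continuousAt.continuousWithinAt
    · rw [interior_Ioi]; exact fun t ht => ((hd m t ht).const_mul _).differentiableWithinAt
    · rw [interior_Ioi]
      intro t ht
      rw [deriv_const_mul _ (hd m t ht), ← iteratedDeriv_succ]
      have hsign := hmono (m + 1) (by omega) t ht
      rw [pow_succ] at hsign
      nlinarith [hsign]
  have hfac : (0 : ℝ) < (m.factorial : ℝ) := by positivity
  have hSξ : ∑ i, f (x i) / ∏ j ∈ Finset.univ.erase i, (x j - x i)
      = ((-1 : ℝ) ^ m * iteratedDeriv m f ξ) / (m.factorial : ℝ) := by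
    rw [hSum, hξeq]
    field_simp
  constructor
  · rw [hSξ, div_mul_eq_mul_div]
    gcongr ?_ / _
    simpa using hanti (Set.mem_Ioi.mpr hξpos) (Set.mem_Ioi.mpr hbpos) hξb
  · rw [hSξ, div_mul_eq_mul_div]
    gcongr ?_ / _
    simpa using hanti (Set.mem_Ioi.mpr ha) (Set.mem_Ioi.mpr hξpos) haξ
end

section
/- Let f : (0,∞) → [0,∞) be infinitely differentiable and strictly completely increasing, i.e. (−1)^k f^(k)(x) < 0 for every x ∈ (0,∞) and every integer k ≥ 1. Let n ≥ 2 be an integer and let x_1, …, x_n ∈ (0,∞) be pairwise distinct, with m = min_i x_i and M = max_i x_i. Then for all real numbers a, b with 0 < a ≤ m and M ≤ b, one has ((−1)^(n−1)/(n−1)!) f^(n−1)(a) < Σ_{i=1}^n f(x_i) / Π_{j≠i} (x_j − x_i) < ((−1)^(n−1)/(n−1)!) f^(n−1)(b). -/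
open Set Filter Topology Finset

lemma contDiffOn_iteratedDeriv' {g : ℝ → ℝ} {U : Set ℝ} (hU : IsOpen U)
    (hg : ContDiffOn ℝ (⊤ : ℕ∞) g U) (k : ℕ) : ContDiffOn ℝ (⊤ : ℕ∞) (iteratedDeriv k g) U := by
  induction k with
  | zero => simpa [iteratedDeriv_zero] using hg
  | succ k ih =>
    rw [iteratedDeriv_succ]
    have h1 : ContDiffOn ℝ (⊤ : ℕ∞) (derivWithin (iteratedDeriv k g) U) U :=
      ih.derivWithin hU.uniqueDiffOn (by simp)
    exact h1.congr fun x hx => (derivWithin_of_isOpen hU hx).symm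

lemma diffAt_iteratedDeriv' {g : ℝ → ℝ} {U : Set ℝ} (hU : IsOpen U)
    (hg : ContDiffOn ℝ (⊤ : ℕ∞) g U) (k : ℕ) {x : ℝ} (hx : x ∈ U) :
    DifferentiableAt ℝ (iteratedDeriv k g) x :=
  ((contDiffOn_iteratedDeriv' hU hg k).differentiableOn (by simp)).differentiableAt
    (hU.mem_nhds hx)

open Polynomial in
lemma eqOn_iteratedDeriv_sub_poly {f : ℝ → ℝ} (hf : ContDiffOn ℝ (⊤ : ℕ∞) f (Set.Ioi 0))
    (p : ℝ[X]) (k : ℕ) :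
    Set.EqOn (iteratedDeriv k (fun t => f t - p.eval t))
      (fun t => iteratedDeriv k f t - (derivative^[k] p).eval t) (Set.Ioi 0) := by
  induction k with
  | zero => intro t _; simp [iteratedDeriv_zero]
  | succ k ih =>
    intro t ht
    rw [iteratedDeriv_succ]
    have hev : iteratedDeriv k (fun t => f t - p.eval t)
        =ᶠ[nhds t] fun t => iteratedDeriv k f t - (derivative^[k] p).eval t :=
      Filter.eventuallyEq_of_mem (isOpen_Ioi.mem_nhds ht) ih
    rw [hev.deriv_eq]
    have h1 : DifferentiableAt ℝ (iteratedDeriv k f) t :=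
      diffAt_iteratedDeriv' isOpen_Ioi hf k ht
    have h2 : DifferentiableAt ℝ (fun s => (derivative^[k] p).eval s) t :=
      (Polynomial.differentiable _).differentiableAt
    rw [deriv_fun_sub h1 h2]
    simp [iteratedDeriv_succ, Polynomial.deriv, Function.iterate_succ_apply']

lemma contOn_of_smooth {g : ℝ → ℝ} (hg : ContDiffOn ℝ (⊤ : ℕ∞) g (Set.Ioi 0)) (k : ℕ) :
    ContinuousOn (iteratedDeriv k g) (Set.Ioi 0) :=
  (contDiffOn_iteratedDeriv' isOpen_Ioi hg k).continuousOn

lemma iterRolle : ∀ (m : ℕ) (g : ℝ → ℝ),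
    (∀ k : ℕ, ContinuousOn (iteratedDeriv k g) (Set.Ioi 0)) →
    ∀ (z : Fin (m + 2) → ℝ), StrictMono z → (∀ i, z i ∈ Set.Ioi (0:ℝ)) →
    (∀ i, g (z i) = 0) →
    ∃ ξ, z 0 < ξ ∧ ξ < z (Fin.last (m+1)) ∧ iteratedDeriv (m+1) g ξ = 0 := by
  intro m
  induction m with
  | zero =>
    intro g hg z hz hzpos hz0
    have h01 : z 0 < z 1 := hz (by norm_num)
    have hIcc : Set.Icc (z 0) (z 1) ⊆ Set.Ioi (0:ℝ) :=
      fun y hy => lt_of_lt_of_le (hzpos 0) hy.1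
    have hcont : ContinuousOn g (Set.Icc (z 0) (z 1)) :=
      ((by simpa [iteratedDeriv_zero] using hg 0 : ContinuousOn g (Set.Ioi 0))).mono hIcc
    obtain ⟨c, hc, hc0⟩ := exists_deriv_eq_zero h01 hcont (by rw [hz0 0, hz0 1])
    exact ⟨c, hc.1, hc.2, by simpa [iteratedDeriv_one] using hc0⟩
  | succ m ihm =>
    intro g hg z hz hzpos hz0
    have key : ∀ i : Fin (m+2), ∃ c, c ∈ Set.Ioo (z i.castSucc) (z i.succ) ∧ deriv g c = 0 := by
      intro i
      have hlt : z i.castSucc < z i.succ := hz Fin.castSucc_lt_succ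
      have hIcc : Set.Icc (z i.castSucc) (z i.succ) ⊆ Set.Ioi (0:ℝ) :=
        fun y hy => lt_of_lt_of_le (hzpos _) hy.1
      have hcont : ContinuousOn g (Set.Icc (z i.castSucc) (z i.succ)) :=
        ((by simpa [iteratedDeriv_zero] using hg 0 : ContinuousOn g (Set.Ioi 0))).mono hIcc
      obtain ⟨c, hc, h0⟩ := exists_deriv_eq_zero hlt hcont (by rw [hz0, hz0])
      exact ⟨c, hc, h0⟩
    choose c hcmem hc0 using key
    have hcmono : StrictMono c := by
      intro i j hij
      calc c i < z i.succ := (hcmem i).2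
        _ ≤ z j.castSucc := hz.monotone (by
            rw [Fin.le_def]; rw [Fin.lt_def] at hij; simp; omega)
        _ < c j := (hcmem j).1
    have hg' : ∀ k : ℕ, ContinuousOn (iteratedDeriv k (deriv g)) (Set.Ioi 0) := by
      intro k; rw [← iteratedDeriv_succ']; exact hg (k+1)
    have hcpos : ∀ i, c i ∈ Set.Ioi (0:ℝ) :=
      fun i => lt_trans (hzpos i.castSucc) (hcmem i).1
    obtain ⟨ξ, h1, h2, h3⟩ := ihm (deriv g) hg' c hcmono hcpos hc0
    refine ⟨ξ, ?_, ?_, ?_⟩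
    · have : z ((0 : Fin (m+2)).castSucc) < c 0 := (hcmem 0).1
      simpa using lt_trans this h1
    · have hlast : c (Fin.last (m+1)) < z ((Fin.last (m+1)).succ) := (hcmem _).2
      rw [Fin.succ_last] at hlast
      exact lt_trans h2 hlast
    · rw [iteratedDeriv_succ']
      exact h3

open Polynomial in
lemma coeff_interpolate_top {n : ℕ} (hn : 1 ≤ n) (x : Fin n → ℝ) (r : Fin n → ℝ) :
    (Lagrange.interpolate Finset.univ x r).coeff (n-1) =
      ∑ i, r i * ∏ j ∈ Finset.univ.erase i, (x i - x j)⁻¹ := by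
  classical
  rw [Lagrange.interpolate_apply, Polynomial.finset_sum_coeff]
  refine Finset.sum_congr rfl fun i _ => ?_
  rw [Polynomial.coeff_C_mul]
  congr 1
  have hb := Lagrange.basis_eq_prod_sub_inv_mul_nodal_div (s := Finset.univ) (v := x)
    (Finset.mem_univ i)
  rw [hb, ← Lagrange.nodal_erase_eq_nodal_div (Finset.mem_univ i), Polynomial.coeff_C_mul]
  have hmonic : (Lagrange.nodal (Finset.univ.erase i) x).Monic := Lagrange.nodal_monic
  have hdeg : (Lagrange.nodal (Finset.univ.erase i) x).natDegree = n - 1 := by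
    rw [Lagrange.natDegree_nodal, Finset.card_erase_of_mem (Finset.mem_univ i),
      Finset.card_univ, Fintype.card_fin]
  rw [← hdeg, hmonic.coeff_natDegree, mul_one]
  rfl

open Polynomial in
lemma eval_iterate_derivative_of_natDegree_le {p : ℝ[X]} {k : ℕ} (h : p.natDegree ≤ k) (t : ℝ) :
    (Polynomial.derivative^[k] p).eval t = k.factorial * p.coeff k := by
  have hd : (Polynomial.derivative^[k] p).natDegree = 0 := by
    have := Polynomial.natDegree_iterate_derivative p k; omega
  obtain ⟨c, hc⟩ := Polynomial.natDegree_eq_zero.mp hd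
  have hc0 : c = (Polynomial.derivative^[k] p).coeff 0 := by rw [← hc]; simp
  rw [← hc, Polynomial.eval_C, hc0, Polynomial.coeff_iterate_derivative]
  simp [Nat.descFactorial_self, nsmul_eq_mul]

theorem strictly_completely_increasing_divided_difference_bounds (f : ℝ → ℝ)
    (hf : ContDiffOn ℝ (⊤ : ℕ∞) f (Set.Ioi 0))
    (hnonneg : ∀ x ∈ Set.Ioi (0 : ℝ), 0 ≤ f x)
    (hmono : ∀ k : ℕ, 1 ≤ k → ∀ x ∈ Set.Ioi (0 : ℝ),
      (-1 : ℝ) ^ k * iteratedDeriv k f x < 0)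
    (n : ℕ) (hn : 2 ≤ n) (x : Fin n → ℝ) (hx : ∀ i, x i ∈ Set.Ioi (0 : ℝ))
    (hinj : Function.Injective x)
    (a b : ℝ) (ha : 0 < a) (ham : ∀ i, a ≤ x i) (hbM : ∀ i, x i ≤ b) :
    (-1 : ℝ) ^ (n - 1) / (n - 1).factorial * iteratedDeriv (n - 1) f a <
      ∑ i, f (x i) / ∏ j ∈ Finset.univ.erase i, (x j - x i) ∧
    ∑ i, f (x i) / ∏ j ∈ Finset.univ.erase i, (x j - x i) <
      (-1 : ℝ) ^ (n - 1) / (n - 1).factorial * iteratedDeriv (n - 1) f b := by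
  classical
  obtain ⟨m, rfl⟩ : ∃ m, n = m + 2 := ⟨n - 2, by omega⟩
  simp only [show m + 2 - 1 = m + 1 from rfl]
  set p : Polynomial ℝ := Lagrange.interpolate Finset.univ x (fun i => f (x i)) with hp
  set S := ∑ i, f (x i) / ∏ j ∈ Finset.univ.erase i, (x j - x i) with hS
  have hinjOn : Set.InjOn x (Finset.univ : Finset (Fin (m+2))) := fun i _ j _ h => hinj h
  -- coefficient relation
  have hcoeff : p.coeff (m+1) = (-1:ℝ)^(m+1) * S := by
    have h1 := coeff_interpolate_top (n := m+2) (by omega) x (fun i => f (x i))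
    rw [show m + 2 - 1 = m + 1 from rfl] at h1
    rw [hp, h1, hS, Finset.mul_sum]
    refine Finset.sum_congr rfl fun i _ => ?_
    have hcard : (Finset.univ.erase i).card = m + 1 := by
      rw [Finset.card_erase_of_mem (Finset.mem_univ i), Finset.card_univ, Fintype.card_fin]; omega
    have hprod : ∏ j ∈ Finset.univ.erase i, (x j - x i)
        = (-1:ℝ)^(m+1) * ∏ j ∈ Finset.univ.erase i, (x i - x j) := by
      rw [← hcard, ← Finset.prod_const, ← Finset.prod_mul_distrib]
      exact Finset.prod_congr rfl fun j _ => by ring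
    have hPne : ∏ j ∈ Finset.univ.erase i, (x i - x j) ≠ 0 := by
      refine Finset.prod_ne_zero_iff.mpr fun j hj => sub_ne_zero_of_ne ?_
      exact fun h => (Finset.mem_erase.mp hj).1 (hinj h.symm)
    have he : ((-1:ℝ)^(m+1)) ≠ 0 := pow_ne_zero _ (by norm_num)
    rw [hprod, ← mul_div_assoc, mul_div_mul_left _ _ he, Finset.prod_inv_distrib,
      ← div_eq_mul_inv]
  -- sorted nodes
  set s : Finset ℝ := Finset.univ.image x with hs
  have hcard : s.card = m + 2 := by
    rw [hs, Finset.card_image_of_injective _ hinj, Finset.card_univ, Fintype.card_fin]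
  set z : Fin (m+2) → ℝ := fun i => s.orderEmbOfFin hcard i with hz
  have hzmono : StrictMono z := (s.orderEmbOfFin hcard).strictMono
  have hzmem : ∀ i, ∃ i₀, x i₀ = z i := by
    intro i
    have : z i ∈ s := s.orderEmbOfFin_mem hcard i
    rw [hs] at this
    obtain ⟨i₀, _, h⟩ := Finset.mem_image.mp this
    exact ⟨i₀, h⟩
  have hzpos : ∀ i, z i ∈ Set.Ioi (0:ℝ) := by
    intro i; obtain ⟨i₀, h⟩ := hzmem i; rw [← h]; exact hx i₀
  set g : ℝ → ℝ := fun t => f t - p.eval t with hg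
  have hgz : ∀ i, g (z i) = 0 := by
    intro i
    obtain ⟨i₀, h⟩ := hzmem i
    rw [← h, hg]
    simp only
    rw [hp, Lagrange.eval_interpolate_at_node _ hinjOn (Finset.mem_univ i₀), sub_self]
  have hgcont : ∀ k, ContinuousOn (iteratedDeriv k g) (Set.Ioi 0) := by
    intro k
    have hEq := eqOn_iteratedDeriv_sub_poly hf p k
    have hcontR : ContinuousOn
        (fun t => iteratedDeriv k f t - (Polynomial.derivative^[k] p).eval t) (Set.Ioi 0) :=
      (contOn_of_smooth hf k).sub (Polynomial.continuous _).continuousOn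
    exact hcontR.congr hEq
  obtain ⟨ξ, hξ1, hξ2, hξ0⟩ := iterRolle m g hgcont z hzmono hzpos hgz
  have hξpos : ξ ∈ Set.Ioi (0:ℝ) := lt_trans (hzpos 0) hξ1
  -- degree bound
  have hdeg : p.natDegree ≤ m + 1 := by
    rcases eq_or_ne p 0 with h0 | h0
    · simp [h0]
    · have := Lagrange.degree_interpolate_lt (r := fun i => f (x i)) hinjOn
      rw [← hp] at this
      have h2 : p.degree < ((m+2 : ℕ) : WithBot ℕ) := by
        simpa [Finset.card_univ] using this
      have := (Polynomial.natDegree_lt_iff_degree_lt h0).mpr h2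
      omega
  -- value of iteratedDeriv at ξ
  have hval : iteratedDeriv (m+1) f ξ = (m+1).factorial * ((-1:ℝ)^(m+1) * S) := by
    have hE := eqOn_iteratedDeriv_sub_poly hf p (m+1) hξpos
    rw [hξ0] at hE
    have hev : (Polynomial.derivative^[m+1] p).eval ξ
        = (m+1).factorial * p.coeff (m+1) :=
      eval_iterate_derivative_of_natDegree_le hdeg ξ
    rw [hcoeff] at hev
    simp only at hE
    linarith [hE, hev]
  have hfact : (0:ℝ) < (m+1).factorial := by positivity
  have hSval : S = (-1:ℝ)^(m+1) / (m+1).factorial * iteratedDeriv (m+1) f ξ := by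
    rw [hval]
    have he : ((-1:ℝ)^(m+1)) * ((-1:ℝ)^(m+1)) = 1 := by
      rw [← pow_add]
      exact Even.neg_one_pow ⟨m+1, by ring⟩
    have hne : (((m+1).factorial : ℝ)) ≠ 0 := hfact.ne'
    rw [show (-1:ℝ)^(m+1) / (((m+1).factorial:ℝ)) * ((((m+1).factorial:ℝ)) * ((-1:ℝ)^(m+1) * S))
        = ((-1:ℝ)^(m+1)*(-1:ℝ)^(m+1)) * ((((m+1).factorial:ℝ))/(((m+1).factorial:ℝ))) * S
      from by ring, he, div_self hne, one_mul, one_mul]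
  -- strict monotonicity of the scaled derivative
  set F : ℝ → ℝ := fun t => (-1:ℝ)^(m+1) / (m+1).factorial * iteratedDeriv (m+1) f t with hF
  have hFmono : StrictMonoOn F (Set.Ioi 0) := by
    apply strictMonoOn_of_deriv_pos (convex_Ioi 0)
    · exact continuousOn_const.mul (contOn_of_smooth hf (m+1))
    · intro t ht
      rw [interior_Ioi] at ht
      rw [hF, deriv_const_mul _ (diffAt_iteratedDeriv' isOpen_Ioi hf (m+1) ht)]
      have hsucc : deriv (iteratedDeriv (m+1) f) t = iteratedDeriv (m+2) f t := by
        rw [← iteratedDeriv_succ]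
      rw [hsucc]
      have hneg := hmono (m+2) (by omega) t ht
      have hflip : (0:ℝ) < (-1:ℝ)^(m+1) * iteratedDeriv (m+2) f t := by
        have h2 : (-1:ℝ)^(m+2) = -((-1:ℝ)^(m+1)) := by ring
        rw [h2, neg_mul] at hneg
        linarith
      calc (0:ℝ) < ((-1:ℝ)^(m+1) * iteratedDeriv (m+2) f t) / (m+1).factorial :=
            div_pos hflip hfact
        _ = (-1:ℝ)^(m+1) / (m+1).factorial * iteratedDeriv (m+2) f t := by ring
  -- endpoints
  have haξ : a < ξ := by
    obtain ⟨i₀, h⟩ := hzmem 0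
    calc a ≤ x i₀ := ham i₀
      _ = z 0 := h
      _ < ξ := hξ1
  have hξb : ξ < b := by
    obtain ⟨i₀, h⟩ := hzmem (Fin.last (m+1))
    calc ξ < z (Fin.last (m+1)) := hξ2
      _ = x i₀ := h.symm
      _ ≤ b := hbM i₀
  have hamem : a ∈ Set.Ioi (0:ℝ) := ha
  have hbmem : b ∈ Set.Ioi (0:ℝ) := lt_trans ha (lt_of_lt_of_le haξ hξb.le)
  constructor
  · have := hFmono hamem hξpos haξ
    rw [hF] at this
    simp only at this
    rw [hSval]
    exact this
  · have := hFmono hξpos hbmem hξb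
    rw [hF] at this
    simp only at this
    rw [hSval]
    exact this
end

section
/- Let f : (0,∞) → [0,∞) be infinitely differentiable and strictly completely decreasing, i.e. (−1)^k f^(k)(x) > 0 for every x ∈ (0,∞) and every integer k ≥ 1. Let n ≥ 2 be an integer and let x_1, …, x_n ∈ (0,∞) be pairwise distinct, with m = min_i x_i and M = max_i x_i. Then for all real numbers a, b with 0 < a ≤ m and M ≤ b, one has ((−1)^(n−1)/(n−1)!) f^(n−1)(b) < Σ_{i=1}^n f(x_i) / Π_{j≠i} (x_j − x_i) < ((−1)^(n−1)/(n−1)!) f^(n−1)(a). -/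
open Set Filter Topology Finset Polynomial Lagrange

lemma aux_contDiffOn_iteratedDeriv {g : ℝ → ℝ} {s : Set ℝ} (hs : IsOpen s)
    (hg : ContDiffOn ℝ (⊤ : ℕ∞) g s) (k : ℕ) : ContDiffOn ℝ (⊤ : ℕ∞) (iteratedDeriv k g) s := by
  induction k with
  | zero => simpa using hg
  | succ k ih =>
    rw [iteratedDeriv_succ]
    exact ih.deriv_of_isOpen hs (by simp)

lemma aux_hasDerivAt {g : ℝ → ℝ} {s : Set ℝ} (hs : IsOpen s)
    (hg : ContDiffOn ℝ (⊤ : ℕ∞) g s) (k : ℕ) {x : ℝ} (hx : x ∈ s) :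
    HasDerivAt (iteratedDeriv k g) (iteratedDeriv (k + 1) g x) x := by
  have h1 := aux_contDiffOn_iteratedDeriv hs hg k
  have h2 : DifferentiableAt ℝ (iteratedDeriv k g) x :=
    (h1.differentiableOn (by simp)).differentiableAt (hs.mem_nhds hx)
  have := h2.hasDerivAt
  rwa [iteratedDeriv_succ]

lemma aux_iterated_rolle : ∀ (k : ℕ) (g : ℝ → ℝ), ContDiffOn ℝ (⊤ : ℕ∞) g (Ioi 0) →
    ∀ (y : Fin (k + 2) → ℝ), StrictMono y → (∀ i, 0 < y i) → (∀ i, g (y i) = 0) →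
    ∃ ξ ∈ Ioo (y 0) (y (Fin.last (k + 1))), iteratedDeriv (k + 1) g ξ = 0 := by
  intro k
  induction k with
  | zero =>
    intro g hg y hy hpos hz
    have h01 : y 0 < y (Fin.last 1) := hy (by decide)
    have hcont : ContinuousOn g (Icc (y 0) (y (Fin.last 1))) :=
      hg.continuousOn.mono (fun z hz => lt_of_lt_of_le (hpos 0) hz.1)
    obtain ⟨c, hc, hc0⟩ := exists_deriv_eq_zero h01 hcont (by rw [hz, hz])
    exact ⟨c, hc, by rwa [iteratedDeriv_one]⟩
  | succ k ih =>
    intro g hg y hy hpos hz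
    have hex : ∀ i : Fin (k + 2), ∃ c ∈ Ioo (y i.castSucc) (y i.succ), deriv g c = 0 := by
      intro i
      have hlt : y i.castSucc < y i.succ := hy Fin.castSucc_lt_succ
      have hcont : ContinuousOn g (Icc (y i.castSucc) (y i.succ)) :=
        hg.continuousOn.mono (fun z hz => lt_of_lt_of_le (hpos _) hz.1)
      exact exists_deriv_eq_zero hlt hcont (by rw [hz, hz])
    choose z hzmem hz0 using hex
    have hzy : ∀ i : Fin (k + 2), y 0 ≤ y i.castSucc ∧ y i.succ ≤ y (Fin.last (k + 2)) := by
      intro i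
      exact ⟨hy.monotone (Fin.zero_le _), hy.monotone (Fin.le_last _)⟩
    have hzmono : StrictMono z := by
      intro i j hij
      calc z i < y i.succ := (hzmem i).2
        _ ≤ y j.castSucc := hy.monotone (by
          rw [Fin.le_def]
          simp only [Fin.val_succ, Fin.coe_castSucc]
          rw [Fin.lt_def] at hij; omega)
        _ < z j := (hzmem j).1
    have hzpos : ∀ i, 0 < z i := fun i => lt_trans (hpos _) (hzmem i).1
    have hg' : ContDiffOn ℝ (⊤ : ℕ∞) (deriv g) (Ioi 0) :=
      hg.deriv_of_isOpen isOpen_Ioi (by simp)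
    obtain ⟨ξ, hξ, hξ0⟩ := ih (deriv g) hg' z hzmono hzpos hz0
    refine ⟨ξ, ⟨?_, ?_⟩, by rwa [iteratedDeriv_succ']⟩
    · have h0 : y 0 < z 0 := by simpa using (hzmem 0).1
      exact h0.trans hξ.1
    · calc ξ < z (Fin.last (k + 1)) := hξ.2
        _ < y (Fin.last (k + 1)).succ := (hzmem _).2
        _ ≤ y (Fin.last (k + 2)) := by rw [Fin.succ_last]

lemma aux_coeff_basis {t : Finset ℝ} {c : ℝ} (hc : c ∈ t) :
    (Lagrange.basis t id c).coeff (t.card - 1) = nodalWeight t id c := by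
  have hinj : Set.InjOn (id : ℝ → ℝ) t := Function.injective_id.injOn
  have hdeg : (Lagrange.basis t id c).natDegree = t.card - 1 := natDegree_basis hinj hc
  rw [← hdeg, coeff_natDegree]
  unfold Lagrange.basis nodalWeight
  rw [leadingCoeff_prod]
  refine Finset.prod_congr rfl fun d hd => ?_
  have hne : (id c : ℝ) ≠ id d := fun h => (Finset.mem_erase.1 hd).1 (h.symm)
  rw [basisDivisor, leadingCoeff_mul, leadingCoeff_C, leadingCoeff_X_sub_C, mul_one]

lemma aux_coeff_interpolate (t : Finset ℝ) (r : ℝ → ℝ) :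
    (interpolate t id r).coeff (t.card - 1) = ∑ c ∈ t, r c * nodalWeight t id c := by
  rw [interpolate_apply, finset_sum_coeff]
  exact Finset.sum_congr rfl fun c hc => by rw [coeff_C_mul, aux_coeff_basis hc]

lemma aux_iteratedDeriv_polyeval (p : ℝ[X]) (k : ℕ) :
    iteratedDeriv k (fun x => p.eval x) = fun x => (derivative^[k] p).eval x := by
  induction k with
  | zero => simp
  | succ k ih =>
    rw [iteratedDeriv_succ, ih, Function.iterate_succ_apply']
    funext x
    rw [Polynomial.deriv]

lemma aux_iterate_derivative_eval {p : ℝ[X]} {k : ℕ} (hp : p.natDegree ≤ k) (x : ℝ) :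
    (derivative^[k] p).eval x = k.factorial * p.coeff k := by
  have h0 : derivative (derivative^[k] p) = 0 := by
    rw [← Function.iterate_succ_apply' (⇑derivative) k p]
    exact iterate_derivative_eq_zero (Nat.lt_succ_of_le hp)
  have : derivative^[k] p = C ((derivative^[k] p).coeff 0) := by
    have hd : (derivative^[k] p).natDegree = 0 :=
      natDegree_eq_zero_of_derivative_eq_zero h0
    exact (Polynomial.eq_C_of_natDegree_eq_zero hd)
  rw [this, eval_C, coeff_iterate_derivative]
  simp [Nat.descFactorial_self, mul_comm]

lemma aux_contDiff_eval (p : ℝ[X]) : ContDiff ℝ (⊤ : ℕ∞) (fun x => p.eval x) := by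
  have h : (fun x => p.eval x) = fun x : ℝ => ∑ i ∈ p.support, p.coeff i * x ^ i := by
    funext x; rw [Polynomial.eval_eq_sum, Polynomial.sum_def]
  rw [h]
  exact ContDiff.sum fun i _ => contDiff_const.mul (contDiff_id.pow i)

theorem strictly_completely_decreasing_divided_difference_bounds (f : ℝ → ℝ)
    (hf : ContDiffOn ℝ (⊤ : ℕ∞) f (Set.Ioi 0))
    (hnonneg : ∀ x ∈ Set.Ioi (0 : ℝ), 0 ≤ f x)
    (hmono : ∀ k : ℕ, 1 ≤ k → ∀ x ∈ Set.Ioi (0 : ℝ),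
      (-1 : ℝ) ^ k * iteratedDeriv k f x > 0)
    (n : ℕ) (hn : 2 ≤ n) (x : Fin n → ℝ) (hx : ∀ i, x i ∈ Set.Ioi (0 : ℝ))
    (hinj : Function.Injective x)
    (a b : ℝ) (ha : 0 < a) (ham : ∀ i, a ≤ x i) (hbM : ∀ i, x i ≤ b) :
    (-1 : ℝ) ^ (n - 1) / (n - 1).factorial * iteratedDeriv (n - 1) f b <
      ∑ i, f (x i) / ∏ j ∈ Finset.univ.erase i, (x j - x i) ∧
    ∑ i, f (x i) / ∏ j ∈ Finset.univ.erase i, (x j - x i) <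
      (-1 : ℝ) ^ (n - 1) / (n - 1).factorial * iteratedDeriv (n - 1) f a := by
  obtain ⟨k, rfl⟩ := Nat.exists_eq_add_of_le' hn
  have hsub : k + 2 - 1 = k + 1 := rfl
  rw [hsub]
  set t : Finset ℝ := Finset.image x Finset.univ with ht
  have hcard : t.card = k + 2 := by
    rw [ht, Finset.card_image_of_injective _ hinj, Finset.card_univ, Fintype.card_fin]
  have hidInj : Set.InjOn (id : ℝ → ℝ) t := Function.injective_id.injOn
  set P : ℝ[X] := Lagrange.interpolate t id f with hP
  -- rewrite the sum as (-1)^(k+1) * P.coeff (k+1)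
  have hprod_i : ∀ i, ∏ j ∈ Finset.univ.erase i, (x j - x i)
      = ∏ d ∈ t.erase (x i), (d - x i) := by
    intro i
    rw [ht, ← Finset.image_erase hinj, Finset.prod_image
      (fun u _ v _ h => hinj h)]
  have hsum1 : ∑ i, f (x i) / ∏ j ∈ Finset.univ.erase i, (x j - x i)
      = ∑ c ∈ t, f c / ∏ d ∈ t.erase c, (d - c) := by
    rw [ht, Finset.sum_image (fun u _ v _ h => hinj h)]
    exact Finset.sum_congr rfl fun i _ => by rw [hprod_i]
  have hsum2 : ∑ c ∈ t, f c / ∏ d ∈ t.erase c, (d - c)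
      = (-1 : ℝ) ^ (k + 1) * P.coeff (k + 1) := by
    have hco : P.coeff (k + 1) = ∑ c ∈ t, f c * Lagrange.nodalWeight t id c := by
      have := aux_coeff_interpolate t f
      rwa [hcard] at this
    rw [hco, Finset.mul_sum]
    refine Finset.sum_congr rfl fun c hc => ?_
    have hprodneg : ∏ d ∈ t.erase c, (d - c)
        = (-1 : ℝ) ^ (k + 1) * ∏ d ∈ t.erase c, (c - d) := by
      have : ∀ d ∈ t.erase c, d - c = -1 * (c - d) := fun d _ => by ring
      rw [Finset.prod_congr rfl this, Finset.prod_mul_distrib, Finset.prod_const,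
        Finset.card_erase_of_mem hc, hcard]
      norm_num
    have hinv : ((-1 : ℝ) ^ (k + 1))⁻¹ = (-1 : ℝ) ^ (k + 1) := by
      rw [← inv_pow, inv_neg, inv_one]
    rw [hprodneg, Lagrange.nodalWeight, div_eq_mul_inv, mul_inv, hinv]
    simp only [id]
    rw [← Finset.prod_inv_distrib]
    ring
  -- the sorted nodes
  set y : Fin (k + 2) → ℝ := fun i => t.orderEmbOfFin hcard i with hy
  have hymono : StrictMono y := (t.orderEmbOfFin hcard).strictMono
  have hymem : ∀ i, y i ∈ t := fun i => t.orderEmbOfFin_mem hcard i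
  have hyx : ∀ i, ∃ j, x j = y i := by
    intro i
    obtain ⟨j, _, hj⟩ := Finset.mem_image.1 (hymem i)
    exact ⟨j, hj⟩
  have hypos : ∀ i, 0 < y i := by
    intro i; obtain ⟨j, hj⟩ := hyx i; rw [← hj]; exact hx j
  -- the auxiliary function and Rolle
  set g : ℝ → ℝ := fun z => f z - P.eval z with hg
  have hgsmooth : ContDiffOn ℝ (⊤ : ℕ∞) g (Set.Ioi 0) :=
    hf.sub ((aux_contDiff_eval P).contDiffOn)
  have hg0 : ∀ i, g (y i) = 0 := by
    intro i
    have : P.eval (y i) = f (y i) :=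
      Lagrange.eval_interpolate_at_node f hidInj (hymem i)
    simp [hg, this]
  obtain ⟨ξ, hξmem, hξ0⟩ := aux_iterated_rolle k g hgsmooth y hymono hypos hg0
  have hξpos : ξ ∈ Set.Ioi (0 : ℝ) := lt_trans (hypos 0) hξmem.1
  -- iterated derivatives of g on Ioi 0
  have hderiv_eq : ∀ j : ℕ, ∀ z ∈ Set.Ioi (0 : ℝ),
      iteratedDeriv j g z = iteratedDeriv j f z - (derivative^[j] P).eval z := by
    intro j
    induction j with
    | zero => intro z _; simp [hg]
    | succ j ih =>
      intro z hz
      have hev : iteratedDeriv j g =ᶠ[nhds z]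
          fun w => iteratedDeriv j f w - (derivative^[j] P).eval w := by
        filter_upwards [isOpen_Ioi.mem_nhds hz] with w hw using ih w hw
      rw [iteratedDeriv_succ, hev.deriv_eq]
      have h1 : HasDerivAt (iteratedDeriv j f) (iteratedDeriv (j + 1) f z) z :=
        aux_hasDerivAt isOpen_Ioi hf j hz
      have h2 : HasDerivAt (fun w => (derivative^[j] P).eval w)
          ((derivative^[j + 1] P).eval z) z := by
        have h2' := (derivative^[j] P).hasDerivAt z
        rwa [← Function.iterate_succ_apply' (⇑derivative) j P] at h2'
      exact (h1.sub h2).deriv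
  have hPdeg : P.natDegree ≤ k + 1 := by
    have hdlt := Lagrange.degree_interpolate_lt (r := f) hidInj
    rw [hcard] at hdlt
    rcases eq_or_ne P 0 with h0 | h0
    · simp [h0]
    · rw [degree_eq_natDegree h0] at hdlt
      exact_mod_cast Nat.lt_succ_iff.mp (by exact_mod_cast hdlt)
  have hkey : iteratedDeriv (k + 1) f ξ = (k + 1).factorial * P.coeff (k + 1) := by
    have := hderiv_eq (k + 1) ξ hξpos
    rw [hξ0, aux_iterate_derivative_eval hPdeg] at this
    linarith
  -- strict antitonicity of u ↦ (-1)^(k+1) * f^(k+1)(u) on [a, b]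
  have hFpos : (0 : ℝ) < (k + 1).factorial := by
    exact_mod_cast Nat.factorial_pos (k + 1)
  set h : ℝ → ℝ := fun u => (-1 : ℝ) ^ (k + 1) * iteratedDeriv (k + 1) f u with hh
  have hanti : StrictAntiOn h (Set.Icc a b) := by
    have hsubset : Set.Icc a b ⊆ Set.Ioi 0 := fun z hz => lt_of_lt_of_le ha hz.1
    apply strictAntiOn_of_deriv_neg (convex_Icc a b)
    · exact continuousOn_const.mul
        (((aux_contDiffOn_iteratedDeriv isOpen_Ioi hf (k + 1)).continuousOn).mono hsubset)
    · intro u hu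
      rw [interior_Icc] at hu
      have hu0 : u ∈ Set.Ioi (0 : ℝ) := lt_trans ha hu.1
      have hd := (aux_hasDerivAt isOpen_Ioi hf (k + 1) hu0).const_mul ((-1 : ℝ) ^ (k + 1))
      rw [hh, hd.deriv,
        show iteratedDeriv (k + 1 + 1) f u = iteratedDeriv (k + 2) f u from rfl]
      have hpos := hmono (k + 2) (by omega) u hu0
      have hps : (-1 : ℝ) ^ (k + 2) = (-1 : ℝ) ^ (k + 1) * (-1) := by rw [pow_succ]
      rw [hps] at hpos
      nlinarith [hpos]
  have hay : a ≤ y 0 := by obtain ⟨j, hj⟩ := hyx 0; rw [← hj]; exact ham j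
  have hyb : y (Fin.last (k + 1)) ≤ b := by
    obtain ⟨j, hj⟩ := hyx (Fin.last (k + 1)); rw [← hj]; exact hbM j
  have haξ : a < ξ := lt_of_le_of_lt hay hξmem.1
  have hξb : ξ < b := lt_of_lt_of_le hξmem.2 hyb
  have hξI : ξ ∈ Set.Icc a b := ⟨haξ.le, hξb.le⟩
  have haI : a ∈ Set.Icc a b := ⟨le_refl a, (haξ.trans hξb).le⟩
  have hbI : b ∈ Set.Icc a b := ⟨(haξ.trans hξb).le, le_refl b⟩
  have hS : ∑ i, f (x i) / ∏ j ∈ Finset.univ.erase i, (x j - x i)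
      = h ξ / (k + 1).factorial := by
    rw [hsum1, hsum2, hh]
    show _ = (-1 : ℝ) ^ (k + 1) * iteratedDeriv (k + 1) f ξ / _
    rw [hkey]
    field_simp
  constructor
  · rw [hS, div_mul_eq_mul_div]
    exact (div_lt_div_iff_of_pos_right hFpos).mpr (hanti hξI hbI hξb)
  · rw [hS, div_mul_eq_mul_div]
    exact (div_lt_div_iff_of_pos_right hFpos).mpr (hanti haI hξI haξ)
end

section
/- Let f : (0,∞) → [0,∞) be infinitely differentiable and completely increasing, i.e. (−1)^k f^(k)(x) ≤ 0 for every x ∈ (0,∞) and every integer k ≥ 1. Let n ≥ 1 be an integer and let x_1, …, x_n ∈ (0,∞) be pairwise distinct. If (−1)^(n−1) f^(n−1)(x) tends to a real number L₀ as x → 0+, then L₀/(n−1)! ≤ Σ_{i=1}^n f(x_i) / Π_{j≠i} (x_j − x_i); and if (−1)^(n−1) f^(n−1)(x) tends to a real number L_∞ as x → ∞, then Σ_{i=1}^n f(x_i) / Π_{j≠i} (x_j − x_i) ≤ L_∞/(n−1)!. -/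
open Set Filter Topology Finset

section aux
open Polynomial

private lemma poly_contDiff' (p : ℝ[X]) : ContDiff ℝ (⊤ : ℕ∞) fun t => p.eval t := by
  induction p using Polynomial.induction_on' with
  | add p q hp hq => simpa [Polynomial.eval_add] using hp.add hq
  | monomial k a => simpa [Polynomial.eval_monomial] using contDiff_const.mul (contDiff_id.pow k)

private lemma aux_id' (F : ℝ → ℝ) (hF : ContDiffOn ℝ (⊤ : ℕ∞) F (Set.Ioi 0)) (k : ℕ) :
    ContDiffOn ℝ (⊤ : ℕ∞) (iteratedDeriv k F) (Set.Ioi 0) ∧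
    ∀ t ∈ Set.Ioi (0:ℝ), HasDerivAt (iteratedDeriv k F) (iteratedDeriv (k+1) F t) t := by
  induction k generalizing F with
  | zero =>
    refine ⟨by simpa using hF, fun t ht => ?_⟩
    have hd : DifferentiableAt ℝ F t :=
      (hF.contDiffAt (isOpen_Ioi.mem_nhds ht)).differentiableAt (by simp)
    simpa [iteratedDeriv_one, iteratedDeriv_zero] using hd.hasDerivAt
  | succ k ih =>
    have hF' : ContDiffOn ℝ (⊤ : ℕ∞) (deriv F) (Set.Ioi 0) := hF.deriv_of_isOpen isOpen_Ioi (by simp)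
    obtain ⟨h1, h2⟩ := ih (deriv F) hF'
    refine ⟨by rw [iteratedDeriv_succ']; exact h1, fun t ht => ?_⟩
    have := h2 t ht
    simp only [iteratedDeriv_succ'] at this ⊢
    exact this

private lemma rolle_iter' : ∀ (m : ℕ) (H : ℝ → ℝ), ContDiffOn ℝ (⊤ : ℕ∞) H (Set.Ioi 0) →
    ∀ (y : Fin (m+1) → ℝ), StrictMono y → 0 < y 0 → (∀ i, H (y i) = 0) →
    ∃ ξ, 0 < ξ ∧ iteratedDeriv m H ξ = 0 := by
  intro m
  induction m with
  | zero => exact fun H _ y _ h0 hz => ⟨y 0, h0, by simpa using hz 0⟩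
  | succ m ih =>
    intro H hH y hy h0 hz
    have hcont : ContinuousOn H (Set.Ioi 0) := hH.continuousOn
    have key : ∀ i : Fin (m+1), ∃ c, y i.castSucc < c ∧ c < y i.succ ∧ deriv H c = 0 := by
      intro i
      have hlt : y i.castSucc < y i.succ := hy (Fin.castSucc_lt_succ : i.castSucc < i.succ)
      have hsub : Set.Icc (y i.castSucc) (y i.succ) ⊆ Set.Ioi 0 := fun t ht =>
        lt_of_lt_of_le (lt_of_lt_of_le h0 (hy.monotone (Fin.zero_le _))) ht.1
      obtain ⟨c, hc, hc0⟩ := exists_deriv_eq_zero hlt (hcont.mono hsub) (by rw [hz, hz])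
      exact ⟨c, hc.1, hc.2, hc0⟩
    choose c hc1 hc2 hc0 using key
    have hcmono : StrictMono c := by
      intro i j hij
      calc c i < y i.succ := hc2 i
        _ ≤ y j.castSucc := hy.monotone (by
            rw [Fin.le_def]
            simp only [Fin.val_succ, Fin.coe_castSucc]
            exact hij)
        _ < c j := hc1 j
    have h0' : 0 < c 0 := lt_trans (lt_of_lt_of_le h0 (hy.monotone (Fin.zero_le _))) (hc1 0)
    obtain ⟨ξ, hξ0, hξ⟩ := ih (deriv H) (hH.deriv_of_isOpen isOpen_Ioi (by simp)) c hcmono h0' hc0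
    exact ⟨ξ, hξ0, by rw [iteratedDeriv_succ']; exact hξ⟩

private lemma aux_sub' : ∀ (k : ℕ) (F : ℝ → ℝ), ContDiffOn ℝ (⊤ : ℕ∞) F (Set.Ioi 0) →
    ∀ (p : ℝ[X]) (t : ℝ), t ∈ Set.Ioi (0:ℝ) →
    iteratedDeriv k (fun s => F s - p.eval s) t
      = iteratedDeriv k F t - (derivative^[k] p).eval t := by
  intro k
  induction k with
  | zero => intro F _ p t _; simp
  | succ k ih =>
    intro F hF p t ht
    rw [iteratedDeriv_succ']
    have heq : ∀ s ∈ Set.Ioi (0:ℝ),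
        deriv (fun u => F u - p.eval u) s = (fun u => deriv F u - p.derivative.eval u) s := by
      intro s hs
      have hdF : DifferentiableAt ℝ F s :=
        (hF.contDiffAt (isOpen_Ioi.mem_nhds hs)).differentiableAt (by simp)
      have hdp : DifferentiableAt ℝ (fun u => p.eval u) s := p.differentiable.differentiableAt
      rw [deriv_fun_sub hdF hdp, Polynomial.deriv]
    have hEv : deriv (fun u => F u - p.eval u) =ᶠ[nhds t] fun u => deriv F u - p.derivative.eval u :=
      eventuallyEq_of_mem (isOpen_Ioi.mem_nhds ht) heq
    rw [hEv.iteratedDeriv_eq k, ih (deriv F) (hF.deriv_of_isOpen isOpen_Ioi (by simp)) p.derivative t ht,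
      ← iteratedDeriv_succ', ← Function.iterate_succ_apply]

private lemma basis_coeff' (m : ℕ) (x : Fin (m+1) → ℝ) (i : Fin (m+1)) :
    (Lagrange.basis Finset.univ x i).coeff m = (∏ j ∈ Finset.univ.erase i, (x i - x j))⁻¹ := by
  rw [Lagrange.basis]
  simp only [Lagrange.basisDivisor]
  rw [Finset.prod_mul_distrib, ← map_prod]
  have hq : (∏ j ∈ Finset.univ.erase i, (X - Polynomial.C (x j))).Monic :=
    monic_prod_of_monic _ _ fun j _ => monic_X_sub_C _
  have hqdeg : (∏ j ∈ Finset.univ.erase i, (X - Polynomial.C (x j))).natDegree = m := by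
    rw [Polynomial.natDegree_prod _ _ fun j _ => X_sub_C_ne_zero _]
    simp [Finset.card_erase_of_mem]
  have h1 : (∏ j ∈ Finset.univ.erase i, (X - Polynomial.C (x j))).coeff m = 1 := by
    have := hq.coeff_natDegree
    rwa [hqdeg] at this
  rw [Polynomial.coeff_C_mul, h1, mul_one, Finset.prod_inv_distrib]

/-- Mean value theorem for divided differences. -/
private lemma divided_diff_mvt (m : ℕ) (f : ℝ → ℝ) (hf : ContDiffOn ℝ (⊤ : ℕ∞) f (Set.Ioi 0))
    (x : Fin (m+1) → ℝ) (hx : ∀ i, x i ∈ Set.Ioi (0:ℝ)) (hinj : Function.Injective x) :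
    ∃ ξ, 0 < ξ ∧ (m.factorial : ℝ) *
      (∑ i, f (x i) * (∏ j ∈ Finset.univ.erase i, (x i - x j))⁻¹) = iteratedDeriv m f ξ := by
  have hinjOn : Set.InjOn x ↑(Finset.univ : Finset (Fin (m+1))) := fun a _ b _ h => hinj h
  set p : ℝ[X] := Lagrange.interpolate Finset.univ x (fun i => f (x i)) with hp
  -- zeros of f - p.eval
  set σ := Tuple.sort x with hσ
  have hymono : StrictMono (x ∘ σ) :=
    (Tuple.monotone_sort x).strictMono_of_injective (hinj.comp σ.injective)
  have hz : ∀ i, (fun t => f t - p.eval t) ((x ∘ σ) i) = 0 := by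
    intro i
    have := Lagrange.eval_interpolate_at_node (fun i => f (x i)) hinjOn
      (Finset.mem_univ (σ i))
    simp only [Function.comp_apply, hp, this, sub_self]
  have hh : ContDiffOn ℝ (⊤ : ℕ∞) (fun t => f t - p.eval t) (Set.Ioi 0) :=
    hf.sub (poly_contDiff' p).contDiffOn
  obtain ⟨ξ, hξ0, hξ⟩ := rolle_iter' m _ hh (x ∘ σ) hymono (hx (σ 0)) hz
  refine ⟨ξ, hξ0, ?_⟩
  have hsub := aux_sub' m f hf p ξ hξ0
  rw [hξ] at hsub
  -- compute derivative^[m] p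
  have hdeg : p.natDegree ≤ m := by
    have h1 := Lagrange.degree_interpolate_le (fun i => f (x i)) hinjOn
    have h2 : (#(Finset.univ : Finset (Fin (m+1))) - 1) = m := by simp
    rw [h2] at h1
    exact Polynomial.natDegree_le_iff_degree_le.mpr h1
  have hiter : derivative^[m] p = Polynomial.C ((m.factorial : ℝ) * p.coeff m) := by
    have h1 : (derivative^[m] p).natDegree = 0 := by
      have := Polynomial.natDegree_iterate_derivative p m
      omega
    have h2 := Polynomial.eq_C_of_natDegree_eq_zero h1
    rw [h2, Polynomial.coeff_iterate_derivative]
    simp [Nat.descFactorial_self, nsmul_eq_mul, mul_comm]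
  have hcoeff : p.coeff m = ∑ i, f (x i) * (∏ j ∈ Finset.univ.erase i, (x i - x j))⁻¹ := by
    rw [hp, Lagrange.interpolate_apply, Polynomial.finset_sum_coeff]
    exact Finset.sum_congr rfl fun i _ => by rw [Polynomial.coeff_C_mul, basis_coeff' m x i]
  have := sub_eq_zero.mp hsub.symm
  rw [this, hiter, Polynomial.eval_C, hcoeff]
end aux

theorem completely_increasing_limit_bounds (f : ℝ → ℝ)
    (hf : ContDiffOn ℝ (⊤ : ℕ∞) f (Set.Ioi 0))
    (hnonneg : ∀ x ∈ Set.Ioi (0 : ℝ), 0 ≤ f x)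
    (hmono : ∀ k : ℕ, 1 ≤ k → ∀ x ∈ Set.Ioi (0 : ℝ),
      (-1 : ℝ) ^ k * iteratedDeriv k f x ≤ 0)
    (n : ℕ) (hn : 1 ≤ n) (x : Fin n → ℝ) (hx : ∀ i, x i ∈ Set.Ioi (0 : ℝ))
    (hinj : Function.Injective x) :
    (∀ L₀ : ℝ, Tendsto (fun t : ℝ => (-1 : ℝ) ^ (n - 1) * iteratedDeriv (n - 1) f t)
        (nhdsWithin 0 (Set.Ioi 0)) (nhds L₀) →
      L₀ / (n - 1).factorial ≤ ∑ i, f (x i) / ∏ j ∈ Finset.univ.erase i, (x j - x i)) ∧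
    (∀ Linf : ℝ, Tendsto (fun t : ℝ => (-1 : ℝ) ^ (n - 1) * iteratedDeriv (n - 1) f t)
        atTop (nhds Linf) →
      ∑ i, f (x i) / ∏ j ∈ Finset.univ.erase i, (x j - x i) ≤ Linf / (n - 1).factorial) := by
  obtain ⟨m, rfl⟩ : ∃ m, n = m + 1 := ⟨n - 1, (Nat.succ_pred_eq_of_pos hn).symm⟩
  simp only [Nat.add_sub_cancel]
  set g : ℝ → ℝ := fun t => (-1 : ℝ) ^ m * iteratedDeriv m f t with hg
  -- monotonicity of g on Ioi 0
  have hgd : ∀ t ∈ Set.Ioi (0:ℝ), HasDerivAt g ((-1:ℝ)^m * iteratedDeriv (m+1) f t) t :=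
    fun t ht => ((aux_id' f hf m).2 t ht).const_mul _
  have hgmono : MonotoneOn g (Set.Ioi 0) := by
    apply monotoneOn_of_deriv_nonneg (convex_Ioi 0)
    · exact continuousOn_const.mul (aux_id' f hf m).1.continuousOn
    · intro t ht
      rw [interior_Ioi] at ht
      exact ((hgd t ht).differentiableAt).differentiableWithinAt
    · intro t ht
      rw [interior_Ioi] at ht
      rw [(hgd t ht).deriv]
      have := hmono (m+1) (by omega) t ht
      have hpow : (-1:ℝ)^(m+1) = -((-1:ℝ)^m) := by ring
      rw [hpow] at this
      linarith
  -- the MVT point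
  obtain ⟨ξ, hξ0, hξ⟩ := divided_diff_mvt m f hf x hx hinj
  have hfac : (0:ℝ) < (m.factorial : ℝ) := by exact_mod_cast m.factorial_pos
  -- rewrite the target sum
  have hsum : ∑ i, f (x i) / ∏ j ∈ Finset.univ.erase i, (x j - x i) = g ξ / (m.factorial : ℝ) := by
    have hterm : ∀ i : Fin (m+1),
        f (x i) / ∏ j ∈ Finset.univ.erase i, (x j - x i)
          = (-1:ℝ)^m * (f (x i) * (∏ j ∈ Finset.univ.erase i, (x i - x j))⁻¹) := by
      intro i
      have hprod : ∏ j ∈ Finset.univ.erase i, (x j - x i)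
          = (-1:ℝ)^m * ∏ j ∈ Finset.univ.erase i, (x i - x j) := by
        calc ∏ j ∈ Finset.univ.erase i, (x j - x i)
            = ∏ j ∈ Finset.univ.erase i, (-1) * (x i - x j) :=
              Finset.prod_congr rfl fun j _ => by ring
          _ = (-1:ℝ)^(#(Finset.univ.erase i)) * ∏ j ∈ Finset.univ.erase i, (x i - x j) := by
              rw [Finset.prod_mul_distrib, Finset.prod_const]
          _ = (-1:ℝ)^m * ∏ j ∈ Finset.univ.erase i, (x i - x j) := by
              congr 2
              simp [Finset.card_erase_of_mem]
      rw [hprod, div_eq_mul_inv, mul_inv, ← inv_pow, inv_neg_one]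
      ring
    rw [Finset.sum_congr rfl fun i _ => hterm i, ← Finset.mul_sum]
    rw [eq_div_iff (ne_of_gt hfac), hg]
    show _ = (-1:ℝ)^m * iteratedDeriv m f ξ
    rw [← hξ]
    ring
  have hξmem : ξ ∈ Set.Ioi (0:ℝ) := hξ0
  constructor
  · intro L₀ hL₀
    have hev : ∀ᶠ t in nhdsWithin (0:ℝ) (Set.Ioi 0), g t ≤ g ξ := by
      filter_upwards [self_mem_nhdsWithin,
        mem_nhdsWithin_of_mem_nhds (Iio_mem_nhds hξ0)] with t ht1 ht2
      exact hgmono ht1 hξmem (le_of_lt ht2)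
    have hle : L₀ ≤ g ξ := le_of_tendsto hL₀ hev
    rw [hsum]
    exact div_le_div_of_nonneg_right hle hfac.le
  · intro Linf hLinf
    have hev : ∀ᶠ t in atTop, g ξ ≤ g t := by
      filter_upwards [eventually_ge_atTop (max ξ 1)] with t ht
      have ht0 : t ∈ Set.Ioi (0:ℝ) :=
        lt_of_lt_of_le one_pos (le_trans (le_max_right _ _) ht)
      exact hgmono hξmem ht0 (le_trans (le_max_left _ _) ht)
    have hle : g ξ ≤ Linf := ge_of_tendsto hLinf hev
    rw [hsum]
    exact div_le_div_of_nonneg_right hle hfac.le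
end

section
/- Let n ≥ 1 be an integer and let x_1, …, x_n be pairwise distinct non-negative real numbers. For each i set a_i = (Π_{j≠i} x_j) / (Π_{j≠i} (x_j − x_i)). Then Π_{i=1}^n (1 + x_i)^{a_i} ≤ exp((1/n) Π_{i=1}^n x_i). -/
/-!
With `P = ∏ i, x i` and `g t = ∑ i, a i * log (1 + t * x i)`, the partial fraction identity
`∑ i, ∏_{j ≠ i} (1 + t x_j) / ∏_{j ≠ i} (x_j - x_i) = t ^ (n - 1)` (Lagrange interpolation of the
constant `1`, evaluated at `-1/t`) gives `g' t = P t ^ (n - 1) / ∏ i, (1 + t x_i) ≤ P t ^ (n - 1)`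
for `t > 0`. Comparing with the antiderivative `P t ^ n / n` on `[0, 1]` yields `g 1 ≤ P / n`.
-/

open Finset Polynomial

variable {ι : Type*} [Fintype ι]

theorem hasDerivAt_sum_mul_log_one_add_mul (a x : ι → ℝ) {t : ℝ} (ht : ∀ i, 1 + t * x i ≠ 0) :
    HasDerivAt (fun t => ∑ i, a i * Real.log (1 + t * x i))
      (∑ i, a i * (x i / (1 + t * x i))) t := by
  refine HasDerivAt.fun_sum fun i _ => HasDerivAt.const_mul (a i) ?_
  have h : HasDerivAt (fun t => 1 + t * x i) (x i) t := by
    simpa using ((hasDerivAt_id t).mul_const (x i)).const_add 1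
  exact h.log (ht i)

variable [DecidableEq ι] {F : Type*} [Field F]

/-- The value at `0` of the `i`-th Lagrange basis polynomial on the nodes `v`. -/
def lagrangeWeight (v : ι → F) (i : ι) : F :=
  (∏ j ∈ univ.erase i, v j) / ∏ j ∈ univ.erase i, (v j - v i)

theorem sum_prod_one_add_mul_div_prod_sub [Nonempty ι] {v : ι → F}
    (hv : Function.Injective v) {s : F} (hs : s ≠ 0) :
    ∑ i, (∏ j ∈ univ.erase i, (1 + s * v j)) / ∏ j ∈ univ.erase i, (v j - v i) =
      s ^ (Fintype.card ι - 1) := by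
  have hterm (i : ι) : (∏ j ∈ univ.erase i, (1 + s * v j)) / ∏ j ∈ univ.erase i, (v j - v i) =
      s ^ (Fintype.card ι - 1) * (Lagrange.basis univ v i).eval (-s⁻¹) := by
    rw [Lagrange.basis, eval_prod, ← card_univ, ← card_erase_of_mem (mem_univ i), ← prod_const,
      ← prod_div_distrib, ← prod_mul_distrib]
    refine prod_congr rfl fun j hj => ?_
    have hij : v i - v j ≠ 0 := sub_ne_zero.2 (hv.ne (ne_of_mem_erase hj).symm)
    have hji : v j - v i ≠ 0 := sub_ne_zero.2 (hv.ne (ne_of_mem_erase hj))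
    simp only [Lagrange.basisDivisor, eval_mul, eval_C, eval_sub, eval_X]
    field_simp
    ring
  rw [sum_congr rfl fun i _ => hterm i, ← mul_sum, ← eval_finsetSum,
    Lagrange.sum_basis hv.injOn univ_nonempty, eval_one, mul_one]

theorem sum_lagrangeWeight_mul_div_one_add_mul [Nonempty ι] {v : ι → F}
    (hv : Function.Injective v) {s : F} (hs : s ≠ 0) (hv₁ : ∀ i, 1 + s * v i ≠ 0) :
    ∑ i, lagrangeWeight v i * (v i / (1 + s * v i)) =
      (∏ i, v i) * s ^ (Fintype.card ι - 1) / ∏ i, (1 + s * v i) := by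
  have hterm (i : ι) : lagrangeWeight v i * (v i / (1 + s * v i)) =
      (∏ i, v i) / (∏ i, (1 + s * v i)) *
        ((∏ j ∈ univ.erase i, (1 + s * v j)) / ∏ j ∈ univ.erase i, (v j - v i)) := by
    rw [lagrangeWeight, ← prod_erase_mul _ _ (mem_univ i),
      ← prod_erase_mul _ (fun i => 1 + s * v i) (mem_univ i)]
    have : ∏ j ∈ univ.erase i, (1 + s * v j) ≠ 0 := prod_ne_zero_iff.2 fun j _ => hv₁ j
    field_simp
  rw [sum_congr rfl fun i _ => hterm i, ← mul_sum, sum_prod_one_add_mul_div_prod_sub hv hs]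
  ring

theorem sum_lagrangeWeight_mul_log_one_add_le [Nonempty ι] {x : ι → ℝ} (hx : ∀ i, 0 ≤ x i)
    (hinj : Function.Injective x) :
    ∑ i, lagrangeWeight x i * Real.log (1 + x i) ≤ (∏ i, x i) / Fintype.card ι := by
  set n := Fintype.card ι
  set P := ∏ i, x i
  have hn : n ≠ 0 := Fintype.card_ne_zero
  have hP : 0 ≤ P := prod_nonneg fun i _ => hx i
  have hpos {t : ℝ} (ht : 0 ≤ t) (i : ι) : 0 < 1 + t * x i :=
    add_pos_of_pos_of_nonneg one_pos (mul_nonneg ht (hx i))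
  let f t := P * t ^ n / n - ∑ i, lagrangeWeight x i * Real.log (1 + t * x i)
  let f' t := P * t ^ (n - 1) - ∑ i, lagrangeWeight x i * (x i / (1 + t * x i))
  have hf {t : ℝ} (ht : 0 ≤ t) : HasDerivAt f (f' t) t := by
    refine HasDerivAt.sub ?_ <|
      hasDerivAt_sum_mul_log_one_add_mul _ x fun i => (hpos ht i).ne'
    refine (((hasDerivAt_pow n t).const_mul P).div_const (n : ℝ)).congr_deriv ?_
    field_simp
  have hf' {t : ℝ} (ht : 0 < t) : 0 ≤ f' t := by
    dsimp only [f']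
    rw [sum_lagrangeWeight_mul_div_one_add_mul hinj ht.ne' fun i => (hpos ht.le i).ne', sub_nonneg]
    exact div_le_self (by positivity)
      (one_le_prod fun i _ => le_add_of_nonneg_right (mul_nonneg ht.le (hx i)))
  have hmono : MonotoneOn f (Set.Ici 0) :=
    monotoneOn_of_hasDerivWithinAt_nonneg (f' := f') (convex_Ici 0)
      (fun t ht => (hf ht).continuousAt.continuousWithinAt)
      (by rw [interior_Ici]; exact fun t ht => (hf (le_of_lt ht)).hasDerivWithinAt)
      (by rw [interior_Ici]; exact fun t ht => hf' ht)
  have h01 := hmono Set.self_mem_Ici (Set.mem_Ici.2 zero_le_one) zero_le_one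
  simpa [f, zero_pow hn] using h01

theorem prod_one_add_pow_le_exp (n : ℕ) (hn : 1 ≤ n) (x : Fin n → ℝ)
    (hx : ∀ i, 0 ≤ x i) (hinj : Function.Injective x) :
    ∏ i, (1 + x i) ^
        ((∏ j ∈ Finset.univ.erase i, x j) / (∏ j ∈ Finset.univ.erase i, (x j - x i))) ≤
      Real.exp ((1 / n) * ∏ i, x i) := by
  have : Nonempty (Fin n) := ⟨⟨0, hn⟩⟩
  calc ∏ i, (1 + x i) ^ lagrangeWeight x i
      = Real.exp (∑ i, lagrangeWeight x i * Real.log (1 + x i)) := by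
        rw [Real.exp_sum]
        refine prod_congr rfl fun i _ => ?_
        rw [Real.rpow_def_of_pos (add_pos_of_pos_of_nonneg one_pos (hx i)), mul_comm]
    _ ≤ Real.exp ((1 / n) * ∏ i, x i) := by
        rw [Real.exp_le_exp, one_div_mul_eq_div]
        simpa using sum_lagrangeWeight_mul_log_one_add_le hx hinj
end

section
/- Let n ≥ 1 be an integer and let x_1, …, x_n be pairwise distinct non-negative real numbers. For each i set a_i = (Π_{j≠i} x_j) / (Π_{j≠i} (x_j − x_i)). Then Π_{i=1}^n (1 + x_i)^{a_i} = exp((1/n) Π_{i=1}^n x_i) if and only if x_i = 0 for some i ∈ {1, …, n}. -/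
/-!
Taking logarithms, the claim compares `∑ aᵢ log (1 + xᵢ)` with `(∏ xᵢ) / n`. If some `xₖ = 0`,
then `aᵢ = 0` for `i ≠ k` and `1 + xₖ = 1`, so both sides of the identity are `1`.
If all `xᵢ > 0`, summing the Lagrange basis polynomials at the nodes `-xᵢ` gives the partial
fraction expansion `∑ aᵢ xᵢ / (1 + xᵢ s) = (∏ xᵢ) s^(n-1) / ∏ (1 + xᵢ s)`. This is the derivative
of `s ↦ ∑ aᵢ log (1 + xᵢ s)` and, for `s > 0`, it is strictly smaller than `(∏ xᵢ) s^(n-1)`,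
the derivative of `(∏ xᵢ) sⁿ / n`. Both functions vanish at `0`, so they differ at `s = 1`.
-/

open Finset Polynomial

variable {ι K : Type*} [Fintype ι] [DecidableEq ι] [Field K]

theorem sum_prod_add_div_prod_sub_eq_one [Nonempty ι] {x : ι → K} (hx : Function.Injective x)
    (u : K) :
    ∑ i, (∏ j ∈ univ.erase i, (u + x j)) / ∏ j ∈ univ.erase i, (x j - x i) = 1 := by
  have h := congrArg (eval u)
    (Lagrange.sum_basis (neg_injective.comp hx).injOn (univ_nonempty (α := ι)))
  simp only [Lagrange.basis, Lagrange.basisDivisor, eval_finsetSum, eval_prod, eval_mul, eval_C,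
    eval_sub, eval_X, Function.comp_apply, eval_one] at h
  rw [← h]
  refine sum_congr rfl fun i _ => ?_
  rw [← prod_div_distrib]
  refine prod_congr rfl fun j _ => ?_
  ring

theorem sum_prod_one_add_mul_div_prod_sub_eq_pow [Nonempty ι] {x : ι → K}
    (hx : Function.Injective x) {s : K} (hs : s ≠ 0) :
    ∑ i, (∏ j ∈ univ.erase i, (1 + x j * s)) / ∏ j ∈ univ.erase i, (x j - x i) =
      s ^ (Fintype.card ι - 1) := by
  conv_rhs => rw [← mul_one (s ^ _), ← sum_prod_add_div_prod_sub_eq_one hx s⁻¹, mul_sum]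
  refine sum_congr rfl fun i _ => ?_
  rw [← card_univ, ← card_erase_of_mem (mem_univ i), ← prod_const, mul_div_assoc',
    ← prod_mul_distrib]
  congr 1
  refine prod_congr rfl fun j _ => ?_
  field_simp

theorem sum_div_prod_sub_mul_div_one_add_mul [Nonempty ι] {x : ι → K}
    (hx : Function.Injective x) {s : K} (hs : s ≠ 0) (hden : ∀ i, 1 + x i * s ≠ 0) :
    ∑ i, (∏ j ∈ univ.erase i, x j) / (∏ j ∈ univ.erase i, (x j - x i)) * (x i / (1 + x i * s)) =
      (∏ i, x i) * s ^ (Fintype.card ι - 1) / ∏ i, (1 + x i * s) := by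
  rw [← sum_prod_one_add_mul_div_prod_sub_eq_pow hx hs, mul_sum, sum_div]
  refine sum_congr rfl fun i _ => ?_
  have hQ : ∏ j ∈ univ.erase i, (1 + x j * s) ≠ 0 := prod_ne_zero_iff.mpr fun j _ => hden j
  have hD : ∏ j ∈ univ.erase i, (x j - x i) ≠ 0 :=
    prod_ne_zero_iff.mpr fun j hj => sub_ne_zero.mpr (hx.ne (mem_erase.mp hj).1)
  rw [← mul_prod_erase univ x (mem_univ i),
    ← mul_prod_erase univ (fun j => 1 + x j * s) (mem_univ i)]
  have hi := hden i
  generalize ∏ j ∈ univ.erase i, (1 + x j * s) = Q at hQ ⊢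
  field_simp

open Real

theorem prod_rpow_eq_exp_sum_mul_log {α : Type*} {s : Finset α} {b : α → ℝ}
    (hb : ∀ i ∈ s, 0 < b i) (e : α → ℝ) :
    ∏ i ∈ s, b i ^ e i = exp (∑ i ∈ s, e i * log (b i)) := by
  rw [exp_sum]
  exact prod_congr rfl fun i hi => by rw [rpow_def_of_pos (hb i hi), mul_comm]

theorem sum_div_prod_sub_mul_div_one_add_mul_lt [Nonempty ι] {x : ι → ℝ}
    (hx : Function.Injective x) (hpos : ∀ i, 0 < x i) {s : ℝ} (hs : 0 < s) :
    ∑ i, (∏ j ∈ univ.erase i, x j) / (∏ j ∈ univ.erase i, (x j - x i)) * (x i / (1 + x i * s)) <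
      (∏ i, x i) * s ^ (Fintype.card ι - 1) := by
  have hden : ∀ i, 1 < 1 + x i * s := fun i => lt_add_of_pos_right 1 (mul_pos (hpos i) hs)
  have hprod : 1 < ∏ i, (1 + x i * s) := by
    simpa using prod_lt_prod_of_nonempty (f := fun _ => (1 : ℝ)) (fun _ _ => one_pos)
      (fun i _ => hden i) univ_nonempty
  rw [sum_div_prod_sub_mul_div_one_add_mul hx hs.ne' fun i => (one_pos.trans (hden i)).ne']
  exact div_lt_self (mul_pos (prod_pos fun i _ => hpos i) (pow_pos hs _)) hprod

theorem sum_div_prod_sub_mul_log_one_add_lt [Nonempty ι] {x : ι → ℝ}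
    (hx : Function.Injective x) (hpos : ∀ i, 0 < x i) :
    ∑ i, (∏ j ∈ univ.erase i, x j) / (∏ j ∈ univ.erase i, (x j - x i)) * log (1 + x i) <
      (∏ i, x i) / Fintype.card ι := by
  set N := Fintype.card ι
  set a : ι → ℝ := fun i => (∏ j ∈ univ.erase i, x j) / ∏ j ∈ univ.erase i, (x j - x i)
  have hN0 : N ≠ 0 := Fintype.card_ne_zero
  have hN : (N : ℝ) ≠ 0 := Nat.cast_ne_zero.mpr hN0
  set F : ℝ → ℝ := fun s => ∑ i, a i * log (1 + x i * s) - (∏ i, x i) * s ^ N / N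
  have hF : ∀ s, 0 ≤ s → HasDerivAt F
      (∑ i, a i * (x i / (1 + x i * s)) - (∏ i, x i) * s ^ (N - 1)) s := by
    intro s hs
    have hlog : ∀ i, HasDerivAt (fun s => log (1 + x i * s)) (x i / (1 + x i * s)) s := by
      intro i
      have hden : 0 < 1 + x i * s := add_pos_of_pos_of_nonneg one_pos (mul_nonneg (hpos i).le hs)
      simpa using (((hasDerivAt_id s).const_mul (x i)).const_add 1).log hden.ne'
    have hpow : HasDerivAt (fun s => (∏ i, x i) * s ^ N / N) ((∏ i, x i) * s ^ (N - 1)) s := by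
      have h := ((hasDerivAt_pow N s).const_mul (∏ i, x i)).div_const (N : ℝ)
      rwa [mul_left_comm, mul_div_cancel_left₀ _ hN] at h
    exact (HasDerivAt.fun_sum fun i _ => (hlog i).const_mul (a i)).sub hpow
  have hanti : StrictAntiOn F (Set.Ici 0) :=
    strictAntiOn_of_deriv_neg (convex_Ici 0)
      (fun s hs => (hF s hs).continuousAt.continuousWithinAt) fun s hs => by
        rw [interior_Ici] at hs
        rw [(hF s hs.le).deriv, sub_neg]
        exact sum_div_prod_sub_mul_div_one_add_mul_lt hx hpos hs
  have h := hanti Set.self_mem_Ici (Set.mem_Ici.mpr zero_le_one) zero_lt_one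
  simp only [F, mul_one, mul_zero, add_zero, log_one, sum_const_zero, one_pow, zero_pow hN0,
    zero_div, sub_zero] at h
  linarith

theorem prod_one_add_rpow_eq_one_of_eq_zero {x : ι → ℝ} {k : ι} (hk : x k = 0) :
    ∏ i, (1 + x i) ^ ((∏ j ∈ univ.erase i, x j) / ∏ j ∈ univ.erase i, (x j - x i)) = 1 := by
  refine prod_eq_one fun i _ => ?_
  obtain rfl | hik := eq_or_ne i k
  · rw [hk, add_zero, one_rpow]
  · rw [prod_eq_zero (mem_erase.mpr ⟨hik.symm, mem_univ k⟩) hk, zero_div, rpow_zero]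

theorem prod_one_add_pow_eq_exp_iff (n : ℕ) (hn : 1 ≤ n) (x : Fin n → ℝ)
    (hx : ∀ i, 0 ≤ x i) (hinj : Function.Injective x) :
    ∏ i, (1 + x i) ^
        ((∏ j ∈ Finset.univ.erase i, x j) / (∏ j ∈ Finset.univ.erase i, (x j - x i))) =
      Real.exp ((1 / n) * ∏ i, x i) ↔ ∃ i, x i = 0 := by
  refine ⟨fun h => ?_, fun ⟨k, hk⟩ => ?_⟩
  · by_contra! hne
    have hpos : ∀ i, 0 < x i := fun i => (hx i).lt_of_ne' (hne i)
    have : Nonempty (Fin n) := ⟨⟨0, hn⟩⟩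
    have hlt := sum_div_prod_sub_mul_log_one_add_lt hinj hpos
    rw [prod_rpow_eq_exp_sum_mul_log fun i _ => by linarith [hpos i], exp_eq_exp] at h
    rw [h, Fintype.card_fin, one_div_mul_eq_div] at hlt
    exact lt_irrefl _ hlt
  · rw [prod_one_add_rpow_eq_one_of_eq_zero hk, prod_eq_zero (mem_univ k) hk, mul_zero, exp_zero]
end

section
/- Let f : (0,∞) → ℝ be given by f(x) = ln(1+x)/x. Then for every integer n ≥ 1 and all pairwise distinct x_1, …, x_n ∈ (0,∞), one has 0 < Σ_{i=1}^n f(x_i) / Π_{j≠i} (x_j − x_i) < 1/n. -/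
/-!
Since `log (1 + x) / x = ∫₀¹ dt / (1 + t x)`, the sum is the integral over `t ∈ [0, 1]` of the
divided difference of `x ↦ 1 / (1 + t x)` at the nodes `x_i`. By partial fractions (the barycentric
Lagrange identity at the point `-1/t`) that divided difference is `t ^ (n - 1) / ∏ (1 + t x_i)`,
which is positive and at most `t ^ (n - 1)`, with strict inequality at `t = 1`; and
`∫₀¹ t ^ (n - 1) dt = 1 / n`.
-/

open Finset Real

section PartialFractions

variable {F ι : Type*} [Field F] [DecidableEq ι] {s : Finset ι} {v : ι → F}

open Lagrange in
theorem Lagrange.sum_nodalWeight_mul_inv_sub (hvs : Set.InjOn v s) (hs : s.Nonempty) {z : F}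
    (hz : ∀ i ∈ s, z ≠ v i) :
    ∑ i ∈ s, nodalWeight s v i * (z - v i)⁻¹ = (∏ i ∈ s, (z - v i))⁻¹ := by
  have h := eval_interpolate_not_at_node (1 : ι → F) hz
  rw [interpolate_one hvs hs, Polynomial.eval_one, eval_nodal] at h
  simp only [Pi.one_apply, mul_one] at h
  exact eq_inv_of_mul_eq_one_right h.symm

open Lagrange in
theorem sum_inv_one_add_mul_div_prod_sub (hvs : Set.InjOn v s) (hs : s.Nonempty) {t : F}
    (ht : t ≠ 0) (hv : ∀ i ∈ s, 1 + t * v i ≠ 0) :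
    ∑ i ∈ s, (1 + t * v i)⁻¹ / ∏ j ∈ s.erase i, (v j - v i) =
      t ^ (#s - 1) / ∏ i ∈ s, (1 + t * v i) := by
  have hlin : ∀ i, 1 + t * v i = -t * (-t⁻¹ - v i) := fun i => by field_simp; ring
  have hz : ∀ i ∈ s, -t⁻¹ ≠ v i := fun i hi h => hv i hi (by rw [hlin, h, sub_self, mul_zero])
  have hsign : ∀ i ∈ s,
      ∏ j ∈ s.erase i, (v j - v i) = (-1) ^ (#s - 1) * (nodalWeight s v i)⁻¹ := by
    intro i hi
    rw [nodalWeight, prod_inv_distrib, inv_inv, ← card_erase_of_mem hi, ← prod_const,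
      ← prod_mul_distrib]
    exact prod_congr rfl fun j _ => by ring
  obtain ⟨m, hm⟩ : ∃ m, #s = m + 1 := Nat.exists_eq_add_one.mpr hs.card_pos
  calc ∑ i ∈ s, (1 + t * v i)⁻¹ / ∏ j ∈ s.erase i, (v j - v i)
      = ∑ i ∈ s, (-t)⁻¹ * (-1) ^ m * (nodalWeight s v i * (-t⁻¹ - v i)⁻¹) :=
        sum_congr rfl fun i hi => by
          rw [hlin, hsign i hi, hm, Nat.add_sub_cancel, div_eq_mul_inv, mul_inv, mul_inv, inv_inv,
            ← inv_pow, inv_neg_one]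
          ring
    _ = (-t)⁻¹ * (-1) ^ m * (∏ i ∈ s, (-t⁻¹ - v i))⁻¹ := by
        rw [← mul_sum, sum_nodalWeight_mul_inv_sub hvs hs hz]
    _ = t ^ (#s - 1) / ∏ i ∈ s, (1 + t * v i) := by
        rw [prod_congr rfl fun i _ => hlin i, prod_mul_distrib, prod_const, hm,
          Nat.add_sub_cancel, pow_succ, neg_pow t m, div_mul_eq_div_div, div_mul_eq_div_div,
          mul_comm ((-1 : F) ^ m), div_mul_cancel_left₀ (pow_ne_zero m ht), ← inv_pow, inv_neg_one]
        ring

end PartialFractions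

theorem integral_inv_one_add_mul {x : ℝ} (hx : -1 < x) (hx0 : x ≠ 0) :
    ∫ t in (0 : ℝ)..1, (1 + t * x)⁻¹ = log (1 + x) / x := by
  simp_rw [add_comm (1 : ℝ), mul_comm _ x]
  rw [intervalIntegral.integral_comp_mul_add (fun u => u⁻¹) hx0, mul_zero, mul_one, zero_add,
    integral_inv_of_pos one_pos (by linarith), div_one, smul_eq_mul, inv_mul_eq_div]

section IntegralKernel

variable {ι : Type*} {s : Finset ι} {v : ι → ℝ}

theorem prod_one_add_mul_pos {t : ℝ} (ht : 0 ≤ t) (hv : ∀ i ∈ s, 0 ≤ v i) :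
    0 < ∏ i ∈ s, (1 + t * v i) :=
  prod_pos fun i hi => add_pos_of_pos_of_nonneg one_pos (mul_nonneg ht (hv i hi))

theorem continuousOn_pow_div_prod_one_add_mul (k : ℕ) (hv : ∀ i ∈ s, 0 ≤ v i) :
    ContinuousOn (fun t : ℝ => t ^ k / ∏ i ∈ s, (1 + t * v i)) (Set.Icc 0 1) :=
  (continuousOn_pow k).div (by fun_prop) fun t ht => (prod_one_add_mul_pos ht.1 hv).ne'

theorem integral_pow_div_prod_one_add_mul_pos (k : ℕ) (hv : ∀ i ∈ s, 0 ≤ v i) :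
    0 < ∫ t in (0 : ℝ)..1, t ^ k / ∏ i ∈ s, (1 + t * v i) := by
  refine intervalIntegral.intervalIntegral_pos_of_pos_on ?_ (fun t ht => ?_) one_pos
  · exact (continuousOn_pow_div_prod_one_add_mul k hv).intervalIntegrable_of_Icc zero_le_one
  · exact div_pos (pow_pos ht.1 k) (prod_one_add_mul_pos ht.1.le hv)

theorem integral_pow_div_prod_one_add_mul_lt (k : ℕ) (hs : s.Nonempty) (hv : ∀ i ∈ s, 0 < v i) :
    ∫ t in (0 : ℝ)..1, t ^ k / ∏ i ∈ s, (1 + t * v i) < 1 / (k + 1) := by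
  have hv₀ : ∀ i ∈ s, 0 ≤ v i := fun i hi => (hv i hi).le
  calc ∫ t in (0 : ℝ)..1, t ^ k / ∏ i ∈ s, (1 + t * v i)
      < ∫ t in (0 : ℝ)..1, t ^ k := by
        refine intervalIntegral.integral_lt_integral_of_continuousOn_of_le_of_exists_lt one_pos
          (continuousOn_pow_div_prod_one_add_mul k hv₀) (continuousOn_pow k)
          (fun t ht => div_le_self (pow_nonneg ht.1.le k) ?_) ⟨1, by simp, ?_⟩
        · exact one_le_prod fun i hi => le_add_of_nonneg_right (mul_nonneg ht.1.le (hv₀ i hi))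
        · rw [one_pow, div_lt_one (prod_one_add_mul_pos zero_le_one hv₀)]
          calc (1 : ℝ) = ∏ _i ∈ s, 1 := prod_const_one.symm
            _ < ∏ i ∈ s, (1 + 1 * v i) :=
              prod_lt_prod_of_nonempty (fun _ _ => one_pos) (fun i hi => by simpa using hv i hi) hs
    _ = 1 / (k + 1) := by simp [integral_pow]

theorem sum_log_one_add_div_div_prod_sub_eq_integral [DecidableEq ι] (hvs : Set.InjOn v s)
    (hs : s.Nonempty) (hv : ∀ i ∈ s, 0 < v i) :
    ∑ i ∈ s, log (1 + v i) / v i / ∏ j ∈ s.erase i, (v j - v i) =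
      ∫ t in (0 : ℝ)..1, t ^ (#s - 1) / ∏ i ∈ s, (1 + t * v i) := by
  have hne : ∀ i ∈ s, ∀ t, 0 ≤ t → 1 + t * v i ≠ 0 := fun i hi t ht =>
    (add_pos_of_pos_of_nonneg one_pos (mul_nonneg ht (hv i hi).le)).ne'
  have hint : ∀ i ∈ s, IntervalIntegrable
      (fun t => (1 + t * v i)⁻¹ / ∏ j ∈ s.erase i, (v j - v i)) MeasureTheory.volume 0 1 :=
    fun i hi => (intervalIntegral.intervalIntegrable_inv (fun t ht => hne i hi t (by
      rw [Set.uIcc_of_le zero_le_one] at ht; exact ht.1)) (by fun_prop)).div_const _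
  calc ∑ i ∈ s, log (1 + v i) / v i / ∏ j ∈ s.erase i, (v j - v i)
      = ∑ i ∈ s, ∫ t in (0 : ℝ)..1, (1 + t * v i)⁻¹ / ∏ j ∈ s.erase i, (v j - v i) :=
        sum_congr rfl fun i hi => by
          rw [intervalIntegral.integral_div,
            integral_inv_one_add_mul (by linarith [hv i hi]) (hv i hi).ne']
    _ = ∫ t in (0 : ℝ)..1, ∑ i ∈ s, (1 + t * v i)⁻¹ / ∏ j ∈ s.erase i, (v j - v i) :=
        (intervalIntegral.integral_finsetSum hint).symm
    _ = ∫ t in (0 : ℝ)..1, t ^ (#s - 1) / ∏ i ∈ s, (1 + t * v i) := by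
        refine intervalIntegral.integral_congr_ae (MeasureTheory.ae_of_all _ fun t ht => ?_)
        rw [Set.uIoc_of_le zero_le_one] at ht
        exact sum_inv_one_add_mul_div_prod_sub hvs hs ht.1.ne' fun i hi => hne i hi t ht.1.le

end IntegralKernel

theorem log_div_divided_difference_bounds (f : ℝ → ℝ)
    (hfdef : ∀ x ∈ Set.Ioi (0 : ℝ), f x = Real.log (1 + x) / x)
    (n : ℕ) (hn : 1 ≤ n) (x : Fin n → ℝ) (hx : ∀ i, x i ∈ Set.Ioi (0 : ℝ))
    (hinj : Function.Injective x) :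
    0 < ∑ i, f (x i) / ∏ j ∈ Finset.univ.erase i, (x j - x i) ∧
    ∑ i, f (x i) / ∏ j ∈ Finset.univ.erase i, (x j - x i) < 1 / n := by
  have hpos : ∀ i ∈ univ, 0 < x i := fun i _ => hx i
  have hne : (univ : Finset (Fin n)).Nonempty := univ_nonempty_iff.mpr ⟨⟨0, hn⟩⟩
  have hsum : ∑ i, f (x i) / ∏ j ∈ univ.erase i, (x j - x i) =
      ∫ t in (0 : ℝ)..1, t ^ (n - 1) / ∏ i, (1 + t * x i) := by
    simp only [hfdef _ (hx _)]
    simpa using sum_log_one_add_div_div_prod_sub_eq_integral hinj.injOn hne hpos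
  have hn' : ((n - 1 : ℕ) : ℝ) + 1 = n := by rw [Nat.cast_sub hn]; ring
  rw [hsum]
  exact ⟨integral_pow_div_prod_one_add_mul_pos _ fun i hi => (hpos i hi).le,
    hn' ▸ integral_pow_div_prod_one_add_mul_lt _ hne hpos⟩
end

section
/- Let f : (0,∞) → ℝ be given by f(x) = ln(1+x)/x. Then f is strictly completely decreasing: f(x) > 0 for all x ∈ (0,∞), and (−1)^k f^(k)(x) > 0 for every x ∈ (0,∞) and every integer k ≥ 1. -/
/-!
With `u = x / (1 + x)` one has `log (1 + x) = -log (1 - u) = ∑ u ^ j / j`. Let `R k x` be the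
tail of this series beyond order `k`. Then `R k 0 = 0` and `R k' x = x ^ k / (1 + x) ^ (k + 1)`,
so `R k > 0` on `(0, ∞)`, and an induction on `k` gives
`(d/dx)^k (log (1 + x) / x) = (-1) ^ k * k ! * R k x / x ^ (k + 1)`.
-/

open Set Filter Topology
open scoped Nat

noncomputable def logSeriesRemainder (k : ℕ) (x : ℝ) : ℝ :=
  Real.log (1 + x) - ∑ j ∈ Finset.range k, (x / (1 + x)) ^ (j + 1) / (j + 1)

theorem hasDerivAt_logSeriesRemainder (k : ℕ) {x : ℝ} (hx : -1 < x) :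
    HasDerivAt (logSeriesRemainder k) (x ^ k / (1 + x) ^ (k + 1)) x := by
  have hne : 1 + x ≠ 0 := by linarith
  have hlog : HasDerivAt (fun t : ℝ => Real.log (1 + t)) (1 / (1 + x)) x := by
    simpa [one_div, Function.comp_def] using
      (Real.hasDerivAt_log hne).comp x ((hasDerivAt_id x).const_add 1)
  have hu : HasDerivAt (fun t : ℝ => t / (1 + t)) (1 / (1 + x) ^ 2) x :=
    ((hasDerivAt_id x).div ((hasDerivAt_id x).const_add 1) hne).congr_deriv (by simp)
  have hsum : HasDerivAt
      (fun t : ℝ => ∑ j ∈ Finset.range k, (t / (1 + t)) ^ (j + 1) / (j + 1))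
      (∑ j ∈ Finset.range k, (x / (1 + x)) ^ j * (1 / (1 + x) ^ 2)) x := by
    refine HasDerivAt.fun_sum fun j _ => ((hu.pow (j + 1)).div_const _).congr_deriv ?_
    simp only [Nat.add_sub_cancel, Nat.cast_add, Nat.cast_one]
    field_simp
  have hu_ne_one : x / (1 + x) ≠ 1 := by
    rw [Ne, div_eq_one_iff_eq hne]
    linarith
  refine (hlog.sub hsum).congr_deriv ?_
  rw [← Finset.sum_mul, geom_sum_eq hu_ne_one, div_pow]
  field_simp
  ring

theorem strictMonoOn_logSeriesRemainder (k : ℕ) :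
    StrictMonoOn (logSeriesRemainder k) (Ici 0) := by
  refine strictMonoOn_of_deriv_pos (convex_Ici 0) (fun y hy => ?_) (fun y hy => ?_)
  · exact (hasDerivAt_logSeriesRemainder k
      (by linarith [mem_Ici.mp hy])).continuousAt.continuousWithinAt
  · rw [interior_Ici] at hy
    rw [(hasDerivAt_logSeriesRemainder k (by linarith [mem_Ioi.mp hy])).deriv]
    have : 0 < y := hy
    positivity

theorem logSeriesRemainder_pos (k : ℕ) {x : ℝ} (hx : 0 < x) : 0 < logSeriesRemainder k x := by
  have h := strictMonoOn_logSeriesRemainder k self_mem_Ici (mem_Ici.mpr hx.le) hx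
  simpa [logSeriesRemainder] using h

theorem hasDerivAt_factorial_mul_logSeriesRemainder_div_pow (k : ℕ) {x : ℝ} (hx₁ : -1 < x)
    (hx₀ : x ≠ 0) :
    HasDerivAt (fun t => (-1) ^ k * k ! * logSeriesRemainder k t / t ^ (k + 1))
      ((-1) ^ (k + 1) * (k + 1)! * logSeriesRemainder (k + 1) x / x ^ (k + 2)) x := by
  refine (((hasDerivAt_logSeriesRemainder k hx₁).const_mul ((-1) ^ k * k ! : ℝ)).div
    (hasDerivAt_pow (k + 1) x) (pow_ne_zero _ hx₀)).congr_deriv ?_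
  simp only [logSeriesRemainder, Finset.sum_range_succ, Nat.factorial_succ, Nat.add_sub_cancel]
  push_cast
  rw [div_pow]
  field_simp
  ring

theorem iteratedDeriv_log_one_add_div (k : ℕ) {x : ℝ} (hx₁ : -1 < x) (hx₀ : x ≠ 0) :
    iteratedDeriv k (fun t : ℝ => Real.log (1 + t) / t) x =
      (-1) ^ k * k ! * logSeriesRemainder k x / x ^ (k + 1) := by
  induction k generalizing x with
  | zero => simp [logSeriesRemainder]
  | succ k ih =>
    have hU : Ioi (-1) ∩ {0}ᶜ ∈ 𝓝 x :=
      (isOpen_Ioi.inter isOpen_compl_singleton).mem_nhds ⟨hx₁, hx₀⟩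
    have heq : iteratedDeriv k (fun t : ℝ => Real.log (1 + t) / t) =ᶠ[𝓝 x]
        fun t => (-1) ^ k * k ! * logSeriesRemainder k t / t ^ (k + 1) :=
      eventually_of_mem hU fun t ht => ih ht.1 ht.2
    rw [iteratedDeriv_succ, heq.deriv_eq,
      (hasDerivAt_factorial_mul_logSeriesRemainder_div_pow k hx₁ hx₀).deriv]

theorem log_div_strictly_completely_decreasing :
    (∀ x ∈ Set.Ioi (0 : ℝ), 0 < Real.log (1 + x) / x) ∧
    (∀ k : ℕ, 1 ≤ k → ∀ x ∈ Set.Ioi (0 : ℝ),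
      0 < (-1 : ℝ) ^ k * iteratedDeriv k (fun t : ℝ => Real.log (1 + t) / t) x) := by
  refine ⟨fun x hx => div_pos (Real.log_pos (by linarith [mem_Ioi.mp hx])) hx,
    fun k _ x hx => ?_⟩
  have hx : 0 < x := hx
  have hsign : ((-1 : ℝ) ^ k) * (-1) ^ k = 1 := by rw [← mul_pow]; norm_num
  rw [iteratedDeriv_log_one_add_div k (by linarith) hx.ne', mul_div_assoc, ← mul_assoc,
    ← mul_assoc, hsign, one_mul]
  have := logSeriesRemainder_pos k hx
  positivity
end

section
/- Let α > 0 and let f : (0,∞) → ℝ be given by f(x) = x/(α + x). Then for every integer n ≥ 2 and all pairwise distinct x_1, …, x_n ∈ (0,∞), one has 0 < −Σ_{i=1}^n f(x_i) / Π_{j≠i} (x_j − x_i) < 1/α^(n−1). -/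
/-!
Since `n ≥ 2`, the polynomial `X` has degree below the number of nodes, so it equals its Lagrange
interpolant at `x₁, …, xₙ`. Evaluating that interpolant at the non-node `-α` is the partial fraction
identity `∑ xᵢ / ((xᵢ + α) ∏_{j ≠ i} (xⱼ - xᵢ)) = -α / ∏ (xᵢ + α)`. So the quantity in question is
`α / ∏ (α + xᵢ)`, which is positive and, as every factor exceeds `α`, smaller than `α / αⁿ`.
-/

open Finset Polynomial Lagrange

theorem Lagrange.sum_eval_div_mul_prod_sub_eq {F ι : Type*} [Field F] [DecidableEq ι]
    {s : Finset ι} {v : ι → F} {p : F[X]} {z : F} (hvs : Set.InjOn v s) (hp : p.degree < #s)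
    (hz : ∀ i ∈ s, z ≠ v i) :
    ∑ i ∈ s, p.eval (v i) / ((v i - z) * ∏ j ∈ s.erase i, (v j - v i)) =
      p.eval z / ∏ i ∈ s, (v i - z) := by
  have hinterp := eval_interpolate_not_at_node (r := fun i => p.eval (v i)) hz
  rw [← eq_interpolate hvs hp, eval_nodal] at hinterp
  have hsign : ∀ i ∈ s, (v i - z) * ∏ j ∈ s.erase i, (v j - v i) =
      (-1) ^ #s * ((z - v i) * ∏ j ∈ s.erase i, (v i - v j)) := by
    intro i hi
    simp_rw [← neg_sub z, ← neg_sub (v i), prod_neg, ← card_erase_add_one hi]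
    ring
  have hsign_sq : ((-1 : F) ^ #s) ^ 2 = 1 := by rw [← pow_mul, pow_mul', neg_one_sq, one_pow]
  have hnodal : ∏ i ∈ s, (z - v i) ≠ 0 := prod_ne_zero_iff.2 fun i hi => sub_ne_zero.2 (hz i hi)
  calc ∑ i ∈ s, p.eval (v i) / ((v i - z) * ∏ j ∈ s.erase i, (v j - v i))
      = (-1) ^ #s * ∑ i ∈ s, nodalWeight s v i * (z - v i)⁻¹ * p.eval (v i) := by
        rw [mul_sum]
        refine sum_congr rfl fun i hi => ?_
        rw [hsign i hi, nodalWeight, prod_inv_distrib]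
        field_simp
        rw [hsign_sq, mul_one]
    _ = p.eval z / ∏ i ∈ s, (v i - z) := by
        rw [hinterp]
        simp_rw [← neg_sub z, prod_neg]
        field_simp
        rw [hsign_sq, one_mul]

theorem self_div_add_divided_difference_bounds (α : ℝ) (hα : 0 < α)
    (f : ℝ → ℝ) (hfdef : ∀ x ∈ Set.Ioi (0 : ℝ), f x = x / (α + x))
    (n : ℕ) (hn : 2 ≤ n) (x : Fin n → ℝ) (hx : ∀ i, x i ∈ Set.Ioi (0 : ℝ))
    (hinj : Function.Injective x) :
    0 < -∑ i, f (x i) / ∏ j ∈ Finset.univ.erase i, (x j - x i) ∧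
    -∑ i, f (x i) / ∏ j ∈ Finset.univ.erase i, (x j - x i) < 1 / α ^ (n - 1) := by
  have hdeg : (X : ℝ[X]).degree < #(univ : Finset (Fin n)) := by
    rw [degree_X, card_univ, Fintype.card_fin]
    exact_mod_cast hn
  have hnode : ∀ i ∈ univ, -α ≠ x i := fun i _ => by linarith [Set.mem_Ioi.1 (hx i)]
  have hsum : ∑ i, f (x i) / ∏ j ∈ univ.erase i, (x j - x i) = -α / ∏ i, (x i + α) := by
    have h := sum_eval_div_mul_prod_sub_eq hinj.injOn hdeg hnode
    simp only [eval_X, sub_neg_eq_add] at h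
    rw [← h]
    refine sum_congr rfl fun i _ => ?_
    rw [hfdef _ (hx i), div_div, add_comm]
  have hprod : α ^ n < ∏ i, (x i + α) := by
    simpa using prod_lt_prod_of_nonempty (fun _ _ => hα)
      (fun i _ => lt_add_of_pos_left α (hx i)) (univ_nonempty_iff.2 ⟨⟨0, by omega⟩⟩)
  rw [hsum, neg_div, neg_neg]
  refine ⟨div_pos hα ((pow_pos hα n).trans hprod), ?_⟩
  calc α / ∏ i, (x i + α) < α / α ^ n := div_lt_div_of_pos_left hα (by positivity) hprod
    _ = 1 / α ^ (n - 1) := by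
      rw [← pow_sub_one_mul (by omega : n ≠ 0)]
      field_simp
end

section
/- Let 0 < α < β and let f : (0,∞) → ℝ be given by f(x) = ln( β(x+α) / (α(x+β)) ). Then for every integer n ≥ 2 and all pairwise distinct x_1, …, x_n ∈ (0,∞), one has 0 < −Σ_{i=1}^n f(x_i) / Π_{j≠i} (x_j − x_i) < (1/(n−1)) (1/α^(n−1) − 1/β^(n−1)). -/
/-!
Writing `f y = ∫ t in α..β, (t⁻¹ - (y + t)⁻¹)`, the divided-difference sum commutes with the
integral. On the integrand it annihilates the constant `t⁻¹` (there are at least two nodes) and,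
by partial fractions, sends `y ↦ (y + t)⁻¹` to `(∏ i, (x i + t))⁻¹`. Hence the quantity equals
`∫ t in α..β, (∏ i, (x i + t))⁻¹`, which lies strictly between `0` and
`∫ t in α..β, (t ^ n)⁻¹ = (α ^ (1 - n) - β ^ (1 - n)) / (n - 1)`.
-/

open Finset

section DividedDifference

variable {F ι : Type*} [Field F] [Fintype ι] [DecidableEq ι] {x : ι → F}

-- Interpolating at the nodes `-x i` turns Mathlib's weights `∏ (v i - v j)` into `∏ (x j - x i)`.
theorem sum_inv_prod_sub_eq_zero (hx : Function.Injective x) (hι : 2 ≤ Fintype.card ι) :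
    ∑ i, (∏ j ∈ univ.erase i, (x j - x i))⁻¹ = 0 := by
  have hdeg : (1 : Polynomial F).degree < #(univ : Finset ι) := by
    rw [Polynomial.degree_one, card_univ]
    exact_mod_cast (by omega : 0 < Fintype.card ι)
  have h := Lagrange.coeff_eq_sum (neg_injective.comp hx).injOn hdeg
  rw [Polynomial.coeff_one, if_neg (by rw [card_univ]; omega)] at h
  simpa only [Polynomial.eval_one, Function.comp_apply, neg_sub_neg, one_div] using h.symm

theorem sum_inv_mul_prod_sub_eq_inv_prod [Nonempty ι] (hx : Function.Injective x) {t : F}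
    (ht : ∀ i, x i + t ≠ 0) :
    ∑ i, ((x i + t) * ∏ j ∈ univ.erase i, (x j - x i))⁻¹ = (∏ i, (x i + t))⁻¹ := by
  have h := Lagrange.eval_interpolate_not_at_node (s := univ) (v := Neg.neg ∘ x) (x := t) 1
    fun i _ => by simpa [eq_neg_iff_add_eq_zero, add_comm] using ht i
  rw [Lagrange.interpolate_one (neg_injective.comp hx).injOn univ_nonempty,
    Polynomial.eval_one, Lagrange.eval_nodal] at h
  simp only [Lagrange.nodalWeight, Function.comp_apply, Pi.one_apply, mul_one, neg_add_eq_sub,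
    sub_neg_eq_add, add_comm t] at h
  rw [← eq_inv_of_mul_eq_one_right h.symm]
  refine sum_congr rfl fun i _ => ?_
  rw [prod_inv_distrib, mul_inv, mul_comm]

theorem sum_inv_sub_inv_div_prod_sub (hx : Function.Injective x) (hι : 2 ≤ Fintype.card ι)
    {t : F} (ht : ∀ i, x i + t ≠ 0) :
    ∑ i, (t⁻¹ - (x i + t)⁻¹) / ∏ j ∈ univ.erase i, (x j - x i) = -(∏ i, (x i + t))⁻¹ := by
  have : Nonempty ι := Fintype.card_pos_iff.mp (by omega)
  calc _ = t⁻¹ * ∑ i, (∏ j ∈ univ.erase i, (x j - x i))⁻¹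
        - ∑ i, ((x i + t) * ∏ j ∈ univ.erase i, (x j - x i))⁻¹ := by
        rw [mul_sum, ← sum_sub_distrib]
        refine sum_congr rfl fun i _ => ?_
        rw [sub_div, div_eq_mul_inv, div_eq_mul_inv, mul_inv]
    _ = _ := by
      rw [sum_inv_prod_sub_eq_zero hx hι, sum_inv_mul_prod_sub_eq_inv_prod hx ht, mul_zero,
        zero_sub]

end DividedDifference

theorem inv_prod_add_lt_inv_pow_card {K ι : Type*} [Field K] [LinearOrder K]
    [IsStrictOrderedRing K] [Fintype ι] [Nonempty ι] {x : ι → K} (hx : ∀ i, 0 < x i) {t : K}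
    (ht : 0 < t) : (∏ i, (x i + t))⁻¹ < (t ^ Fintype.card ι)⁻¹ := by
  refine inv_strictAnti₀ (by positivity) ?_
  rw [← card_univ, ← prod_const]
  exact prod_lt_prod_of_nonempty (fun _ _ => ht) (fun i _ => lt_add_of_pos_left t (hx i))
    univ_nonempty

section Integrals

variable {α β : ℝ}

theorem log_ratio_eq_integral (hα : 0 < α) (hβ : 0 < β) {y : ℝ} (hy : 0 ≤ y) :
    Real.log (β * (y + α) / (α * (y + β))) = ∫ t in α..β, (t⁻¹ - (y + t)⁻¹) := by
  have hpos : ∀ t ∈ Set.uIcc α β, 0 < t := fun t ht => Set.ordConnected_Ioi.uIcc_subset hα hβ ht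
  rw [intervalIntegral.integral_sub
      (intervalIntegral.intervalIntegrable_inv (f := fun t => t) (fun t ht => (hpos t ht).ne')
        continuousOn_id)
      (intervalIntegral.intervalIntegrable_inv (f := fun t => y + t)
        (fun t ht => by linarith [hpos t ht]) (by fun_prop)),
    intervalIntegral.integral_comp_add_left (fun t => t⁻¹), integral_inv_of_pos hα hβ,
    integral_inv_of_pos (by linarith) (by linarith),
    ← Real.log_div (by positivity) (by positivity)]
  congr 1
  field_simp

theorem integral_inv_pow_succ (hα : 0 < α) (hβ : 0 < β) {m : ℕ} (hm : m ≠ 0) :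
    ∫ t in α..β, (t ^ (m + 1))⁻¹ = 1 / m * (1 / α ^ m - 1 / β ^ m) := by
  have h := integral_zpow (a := α) (b := β) (n := -(m + 1 : ℕ))
    (Or.inr ⟨by omega, Set.notMem_uIcc_of_lt hα hβ⟩)
  rw [show -((m + 1 : ℕ) : ℤ) + 1 = -m by push_cast; ring] at h
  simp only [zpow_neg, zpow_natCast] at h
  push_cast at h
  rw [h, show -((m : ℝ) + 1) + 1 = -m by ring]
  have : (m : ℝ) ≠ 0 := by exact_mod_cast hm
  field_simp
  ring

theorem sum_log_ratio_div_prod_sub_eq_neg_integral {ι : Type*} [Fintype ι] [DecidableEq ι]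
    (hα : 0 < α) (hβ : 0 < β) {x : ι → ℝ} (hx : ∀ i, 0 ≤ x i)
    (hinj : Function.Injective x) (hι : 2 ≤ Fintype.card ι) :
    ∑ i, Real.log (β * (x i + α) / (α * (x i + β))) / ∏ j ∈ univ.erase i, (x j - x i) =
      -∫ t in α..β, (∏ i, (x i + t))⁻¹ := by
  have hpos : ∀ t ∈ Set.uIcc α β, 0 < t := fun t ht => Set.ordConnected_Ioi.uIcc_subset hα hβ ht
  simp_rw [log_ratio_eq_integral hα hβ (hx _), ← intervalIntegral.integral_div]
  rw [← intervalIntegral.integral_finsetSum, ← intervalIntegral.integral_neg]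
  · refine intervalIntegral.integral_congr fun t ht => sum_inv_sub_inv_div_prod_sub hinj hι
      fun i => (add_pos_of_nonneg_of_pos (hx i) (hpos t ht)).ne'
  · intro i _
    refine ContinuousOn.intervalIntegrable (ContinuousOn.div_const (ContinuousOn.sub ?_ ?_) _)
    · exact continuousOn_id.inv₀ fun t ht => (hpos t ht).ne'
    · exact (continuousOn_const.add continuousOn_id).inv₀ fun t ht =>
        (add_pos_of_nonneg_of_pos (hx i) (hpos t ht)).ne'

end Integrals

theorem log_ratio_divided_difference_bounds (α β : ℝ) (hα : 0 < α) (hαβ : α < β)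
    (f : ℝ → ℝ) (hfdef : ∀ x ∈ Set.Ioi (0 : ℝ), f x = Real.log (β * (x + α) / (α * (x + β))))
    (n : ℕ) (hn : 2 ≤ n) (x : Fin n → ℝ) (hx : ∀ i, x i ∈ Set.Ioi (0 : ℝ))
    (hinj : Function.Injective x) :
    0 < -∑ i, f (x i) / ∏ j ∈ Finset.univ.erase i, (x j - x i) ∧
    -∑ i, f (x i) / ∏ j ∈ Finset.univ.erase i, (x j - x i) <
      (1 / (n - 1 : ℝ)) * (1 / α ^ (n - 1) - 1 / β ^ (n - 1)) := by
  have hβ : 0 < β := hα.trans hαβ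
  have hsum : ∑ i, f (x i) / ∏ j ∈ univ.erase i, (x j - x i) =
      -∫ t in α..β, (∏ i, (x i + t))⁻¹ := by
    rw [← sum_log_ratio_div_prod_sub_eq_neg_integral hα hβ (fun i => (hx i).le) hinj
      (by simpa using hn)]
    exact sum_congr rfl fun i _ => by rw [hfdef _ (hx i)]
  have hcont : ContinuousOn (fun t => (∏ i, (x i + t))⁻¹) (Set.Icc α β) :=
    ContinuousOn.inv₀ (by fun_prop) fun t ht =>
      (prod_pos fun i _ => add_pos (hx i) (hα.trans_le ht.1)).ne'
  obtain ⟨m, rfl⟩ : ∃ m, n = m + 1 := ⟨n - 1, by omega⟩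
  rw [hsum, neg_neg]
  refine ⟨intervalIntegral.intervalIntegral_pos_of_pos_on
    (hcont.intervalIntegrable_of_Icc hαβ.le)
    (fun t ht => inv_pos.mpr (prod_pos fun i _ => add_pos (hx i) (hα.trans ht.1))) hαβ, ?_⟩
  calc _ < ∫ t in α..β, (t ^ (m + 1))⁻¹ := by
        refine intervalIntegral.integral_lt_integral_of_continuousOn_of_le_of_exists_lt hαβ hcont
          (ContinuousOn.inv₀ (by fun_prop) fun t ht => (pow_pos (hα.trans_le ht.1) _).ne')
          (fun t ht => ?_) ⟨β, Set.right_mem_Icc.mpr hαβ.le, ?_⟩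
        · simpa using (inv_prod_add_lt_inv_pow_card (x := x) hx (hα.trans ht.1)).le
        · simpa using inv_prod_add_lt_inv_pow_card (x := x) hx hβ
    _ = _ := by
      rw [integral_inv_pow_succ hα hβ (by omega)]
      simp
end

section
/- Let α > 0 and let f : (0,∞) → ℝ be given by f(x) = e^(−αx). Then for every integer n ≥ 1 and all pairwise distinct x_1, …, x_n ∈ (0,∞), one has 0 < Σ_{i=1}^n f(x_i) / Π_{j≠i} (x_j − x_i) < α^(n−1)/(n−1)!. -/
/-!
Write `D_x(a) = ∑ᵢ exp (-a xᵢ) / ∏_{j ≠ i} (xⱼ - xᵢ)` and let `x'` be the nodes without `x₀`.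
Differentiating termwise, `exp (x₀ a) D_x(a)` has derivative `exp (x₀ a) D_{x'}(a)`, and it vanishes
at `a = 0` since `∑ᵢ 1 / ∏_{j ≠ i} (xⱼ - xᵢ)` is, up to sign, the top coefficient of the Lagrange
interpolant of the constant `1`. Hence `D_x(a) = ∫₀ᵃ exp (-x₀ (a - s)) D_{x'}(s) ds`, and as the
weight lies in `(0, 1)` for positive nodes, induction on the number of nodes traps `D_x(a)` between
`0` and `∫₀ᵃ sⁿ⁻² / (n - 2)! ds = aⁿ⁻¹ / (n - 1)!`.
-/

open Finset Real intervalIntegral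
open scoped Nat

theorem Lagrange.sum_inv_prod_erase_sub_eq_zero {F ι : Type*} [Field F] [DecidableEq ι]
    {s : Finset ι} {v : ι → F} (hvs : Set.InjOn v s) (hs : 2 ≤ #s) :
    ∑ i ∈ s, (∏ j ∈ s.erase i, (v j - v i))⁻¹ = 0 := by
  have hcoeff := Lagrange.coeff_eq_sum hvs (P := 1)
    (by rw [Polynomial.degree_one]; exact_mod_cast (by omega : 0 < #s))
  rw [Polynomial.coeff_one, if_neg (by omega), eq_comm] at hcoeff
  have hswap : ∀ i ∈ s, ∏ j ∈ s.erase i, (v j - v i)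
      = (-1) ^ (#s - 1) * ∏ j ∈ s.erase i, (v i - v j) := fun i hi => by
    rw [← card_erase_of_mem hi, ← prod_neg]
    simp only [neg_sub]
  rw [sum_congr rfl fun i hi => by rw [hswap i hi], ← mul_zero ((-1 : F) ^ (#s - 1))⁻¹, ← hcoeff,
    mul_sum]
  refine sum_congr rfl fun i _ => ?_
  rw [Polynomial.eval_one, mul_inv, one_div]

theorem Fin.prod_univ_erase_succ {M : Type*} [CommMonoid M] {n : ℕ} (g : Fin (n + 1) → M)
    (i : Fin n) :
    ∏ j ∈ univ.erase i.succ, g j = g 0 * ∏ j ∈ univ.erase i, g j.succ := by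
  have hsucc : i.succ = (⟨Fin.succ, Fin.succ_injective n⟩ : Fin n ↪ Fin (n + 1)) i := rfl
  rw [Fin.univ_succ, erase_cons_of_ne _ (Fin.succ_ne_zero i).symm, Finset.prod_cons, hsucc,
    ← map_erase, prod_map]
  rfl

theorem integral_pow_div_factorial (a : ℝ) (n : ℕ) :
    ∫ s in 0..a, s ^ n / n ! = a ^ (n + 1) / (n + 1)! := by
  rw [intervalIntegral.integral_div, integral_pow, zero_pow n.succ_ne_zero, sub_zero,
    Nat.factorial_succ]
  push_cast
  field_simp

theorem integral_mem_Ioo_pow_div_factorial {g : ℝ → ℝ} (hg : Continuous g) {a : ℝ} (ha : 0 < a)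
    {n : ℕ} (hbound : ∀ s ∈ Set.Ioo 0 a, g s ∈ Set.Ioo 0 (s ^ n / n !)) :
    ∫ s in 0..a, g s ∈ Set.Ioo 0 (a ^ (n + 1) / (n + 1)!) := by
  have hpow : Continuous fun s : ℝ => s ^ n / n ! := by fun_prop
  refine ⟨intervalIntegral_pos_of_pos_on (hg.intervalIntegrable 0 a)
    (fun s hs => (hbound s hs).1) ha, ?_⟩
  have hgap := intervalIntegral_pos_of_pos_on (f := fun s => s ^ n / (n ! : ℝ) - g s)
    ((hpow.sub hg).intervalIntegrable 0 a) (fun s hs => sub_pos.2 (hbound s hs).2) ha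
  rwa [integral_sub (hpow.intervalIntegrable 0 a) (hg.intervalIntegrable 0 a),
    integral_pow_div_factorial, sub_pos] at hgap

noncomputable def expDivDiff {n : ℕ} (x : Fin n → ℝ) (a : ℝ) : ℝ :=
  ∑ i, exp (-a * x i) / ∏ j ∈ univ.erase i, (x j - x i)

section expDivDiff

variable {n : ℕ}

theorem continuous_expDivDiff (x : Fin n → ℝ) : Continuous (expDivDiff x) := by
  unfold expDivDiff
  fun_prop

theorem expDivDiff_apply_zero {x : Fin n → ℝ} (hx : Function.Injective x) (hn : 2 ≤ n) :
    expDivDiff x 0 = 0 := by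
  simpa [expDivDiff] using
    Lagrange.sum_inv_prod_erase_sub_eq_zero hx.injOn (s := univ) (by simpa using hn)

theorem hasDerivAt_exp_mul_expDivDiff {x : Fin (n + 2) → ℝ} (hx : Function.Injective x) (a : ℝ) :
    HasDerivAt (fun a => exp (x 0 * a) * expDivDiff x a)
      (exp (x 0 * a) * expDivDiff (Fin.tail x) a) a := by
  set P : Fin (n + 2) → ℝ := fun i => ∏ j ∈ univ.erase i, (x j - x i)
  have hexpand : (fun a => exp (x 0 * a) * expDivDiff x a)
      = fun a => ∑ i, exp ((x 0 - x i) * a) / P i := by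
    funext a
    rw [expDivDiff, mul_sum]
    refine sum_congr rfl fun i _ => ?_
    rw [mul_div_assoc', ← exp_add]
    congr 2
    ring
  rw [hexpand]
  refine (HasDerivAt.fun_sum fun i _ =>
    (((hasDerivAt_id a).const_mul (x 0 - x i)).exp.div_const (P i))).congr_deriv ?_
  rw [Fin.sum_univ_succ, sub_self, zero_mul, zero_mul, mul_zero, zero_div, zero_add, expDivDiff,
    mul_sum]
  refine sum_congr rfl fun i _ => ?_
  have hP : P i.succ = (x 0 - x i.succ) * ∏ j ∈ univ.erase i, (Fin.tail x j - Fin.tail x i) :=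
    Fin.prod_univ_erase_succ (fun j => x j - x i.succ) i
  have hne : x 0 - x i.succ ≠ 0 := sub_ne_zero.2 fun h => Fin.succ_ne_zero i (hx h).symm
  rw [hP, mul_one, mul_comm (exp _), mul_div_mul_left _ _ hne, mul_div_assoc', ← exp_add, id]
  congr 2
  simp only [Fin.tail]
  ring

theorem expDivDiff_eq_integral {x : Fin (n + 2) → ℝ} (hx : Function.Injective x) (a : ℝ) :
    expDivDiff x a = ∫ s in 0..a, exp (-x 0 * (a - s)) * expDivDiff (Fin.tail x) s := by
  have hftc := integral_eq_sub_of_hasDerivAt (fun s _ => hasDerivAt_exp_mul_expDivDiff hx s)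
    (((continuous_exp.comp (by fun_prop)).mul (continuous_expDivDiff _)).intervalIntegrable 0 a)
  rw [expDivDiff_apply_zero hx (by omega), mul_zero, sub_zero] at hftc
  have hsplit : ∀ s, exp (-x 0 * (a - s)) * expDivDiff (Fin.tail x) s
      = exp (-(x 0 * a)) * (exp (x 0 * s) * expDivDiff (Fin.tail x) s) := fun s => by
    rw [← mul_assoc, ← exp_add]
    ring_nf
  simp_rw [hsplit]
  rw [integral_const_mul, hftc, ← mul_assoc, ← exp_add, neg_add_cancel, exp_zero, one_mul]

theorem expDivDiff_mem_Ioo {x : Fin (n + 1) → ℝ} (hpos : ∀ i, 0 < x i) (hx : Function.Injective x)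
    {a : ℝ} (ha : 0 < a) : expDivDiff x a ∈ Set.Ioo 0 (a ^ n / n !) := by
  induction n generalizing a with
  | zero =>
    have hsingle : expDivDiff x a = exp (-a * x 0) := by simp [expDivDiff]
    rw [hsingle, pow_zero, Nat.factorial_zero, Nat.cast_one, div_one]
    exact ⟨exp_pos _, exp_lt_one_iff.2 (by nlinarith [hpos 0] : -a * x 0 < 0)⟩
  | succ n ih =>
    rw [expDivDiff_eq_integral hx]
    refine integral_mem_Ioo_pow_div_factorial
      ((continuous_exp.comp (by fun_prop)).mul (continuous_expDivDiff _)) ha fun s hs => ?_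
    obtain ⟨hlow, hup⟩ := ih (fun i => hpos i.succ) (hx.comp (Fin.succ_injective _)) hs.1
    have hdecay : exp (-x 0 * (a - s)) < 1 := exp_lt_one_iff.2 (by nlinarith [hpos 0, hs.2])
    exact ⟨mul_pos (exp_pos _) hlow, (mul_lt_of_lt_one_left hlow hdecay).trans hup⟩

end expDivDiff

theorem exp_neg_divided_difference_bounds (α : ℝ) (hα : 0 < α)
    (f : ℝ → ℝ) (hfdef : ∀ x ∈ Set.Ioi (0 : ℝ), f x = Real.exp (-α * x))
    (n : ℕ) (hn : 1 ≤ n) (x : Fin n → ℝ) (hx : ∀ i, x i ∈ Set.Ioi (0 : ℝ))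
    (hinj : Function.Injective x) :
    0 < ∑ i, f (x i) / ∏ j ∈ Finset.univ.erase i, (x j - x i) ∧
    ∑ i, f (x i) / ∏ j ∈ Finset.univ.erase i, (x j - x i) <
      α ^ (n - 1) / (n - 1).factorial := by
  obtain ⟨m, rfl⟩ := Nat.exists_eq_add_of_le' hn
  have hf : ∑ i, f (x i) / ∏ j ∈ Finset.univ.erase i, (x j - x i) = expDivDiff x α :=
    sum_congr rfl fun i _ => by rw [hfdef _ (hx i)]
  rw [hf, Nat.add_sub_cancel]
  exact expDivDiff_mem_Ioo hx hinj hα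
end

section
/- Let α, β, γ > 0 and let f : (0,∞) → ℝ be given by f(x) = (α + βx)^(−γ). Then for every integer n ≥ 1 and all pairwise distinct x_1, …, x_n ∈ (0,∞), one has 0 < Σ_{i=1}^n f(x_i) / Π_{j≠i} (x_j − x_i) < α^(−(γ+n−1)) β^(n−1) (Π_{k=0}^{n−2} (γ + k)) / (n−1)!. -/
/-!
Let `P` be the Lagrange interpolation polynomial of `f` at the nodes. Then `f - P` has `n`
distinct zeros in `(0, ∞)`, so by repeated Rolle its `(n-1)`-th derivative vanishes at some
`ξ > 0`. Since `P^(n-1)` is the constant `(n-1)!` times the divided difference, the sum equals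
`± f^(n-1)(ξ) / (n-1)! = β^(n-1) γ(γ+1)⋯(γ+n-2) (α + βξ)^(-(γ+n-1)) / (n-1)!`, which is
positive and, as `α + βξ > α`, below the bound.
-/

open Finset Set

theorem exists_interlacing_zeros_of_hasDerivAt {U : Set ℝ} (hU : U.OrdConnected)
    {h h' : ℝ → ℝ} (hd : ∀ t ∈ U, HasDerivAt h (h' t) t) {m : ℕ} {a : Fin (m + 1) → ℝ}
    (ha : StrictMono a) (haU : ∀ i, a i ∈ U) (hz : ∀ i, h (a i) = 0) :
    ∃ c : Fin m → ℝ, (∀ i, c i ∈ Ioo (a i.castSucc) (a i.succ)) ∧ ∀ i, h' (c i) = 0 := by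
  have hIcc : ∀ i : Fin m, Icc (a i.castSucc) (a i.succ) ⊆ U := fun i =>
    hU.out (haU _) (haU _)
  have rolle : ∀ i : Fin m, ∃ c ∈ Ioo (a i.castSucc) (a i.succ), h' c = 0 := fun i =>
    exists_hasDerivAt_eq_zero (ha Fin.castSucc_lt_succ)
      (fun t ht => (hd t (hIcc i ht)).continuousAt.continuousWithinAt)
      (by rw [hz, hz]) (fun t ht => hd t (hIcc i (Ioo_subset_Icc_self ht)))
  choose c hc using rolle
  exact ⟨c, fun i => (hc i).1, fun i => (hc i).2⟩

theorem exists_eq_zero_of_hasDerivAt_of_strictMono_zeros {U : Set ℝ} (hU : U.OrdConnected) :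
    ∀ {n : ℕ} {g : ℕ → ℝ → ℝ}, (∀ k, ∀ t ∈ U, HasDerivAt (g k) (g (k + 1) t) t) →
    ∀ {a : Fin (n + 1) → ℝ}, StrictMono a → (∀ i, a i ∈ U) → (∀ i, g 0 (a i) = 0) →
    ∃ ξ ∈ U, g n ξ = 0
  | 0, _, _, a, _, haU, hz => ⟨a 0, haU 0, hz 0⟩
  | n + 1, g, hd, a, ha, haU, hz => by
    obtain ⟨c, hc, hc0⟩ := exists_interlacing_zeros_of_hasDerivAt hU (hd 0) ha haU hz
    have hc_mono : StrictMono c := fun i j hij =>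
      (hc i).2.trans ((ha.monotone (Fin.succ_le_castSucc_iff.mpr hij)).trans_lt (hc j).1)
    have hcU : ∀ i, c i ∈ U := fun i =>
      hU.out (haU _) (haU _) (Ioo_subset_Icc_self (hc i))
    exact exists_eq_zero_of_hasDerivAt_of_strictMono_zeros hU (g := fun k => g (k + 1))
      (fun k => hd (k + 1)) hc_mono hcU hc0

theorem exists_eq_zero_of_hasDerivAt_of_card_zeros {U : Set ℝ} (hU : U.OrdConnected)
    {g : ℕ → ℝ → ℝ} (hd : ∀ k, ∀ t ∈ U, HasDerivAt (g k) (g (k + 1) t) t) {n : ℕ}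
    {s : Finset ℝ} (hs : #s = n + 1) (hsU : ↑s ⊆ U) (hz : ∀ t ∈ s, g 0 t = 0) :
    ∃ ξ ∈ U, g n ξ = 0 :=
  exists_eq_zero_of_hasDerivAt_of_strictMono_zeros hU hd (s.orderEmbOfFin hs).strictMono
    (fun i => hsU (s.orderEmbOfFin_mem hs i)) (fun i => hz _ (s.orderEmbOfFin_mem hs i))

noncomputable def dividedDifference {ι : Type*} [DecidableEq ι] (s : Finset ι) (x : ι → ℝ)
    (f : ℝ → ℝ) : ℝ :=
  ∑ i ∈ s, f (x i) / ∏ j ∈ s.erase i, (x i - x j)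

theorem eval_iterate_derivative_interpolate {ι : Type*} [DecidableEq ι] {s : Finset ι} {x : ι → ℝ}
    (hx : InjOn x s) {m : ℕ} (hs : #s = m + 1) (f : ℝ → ℝ) (t : ℝ) :
    (Polynomial.derivative^[m] (Lagrange.interpolate s x (fun i => f (x i)))).eval t =
      m.factorial * dividedDifference s x f := by
  rw [Lagrange.eval_iterate_derivative_eq_sum hx (Lagrange.degree_interpolate_lt _ hx) (by omega),
    dividedDifference]
  simp only [hs, Nat.sub_self, powersetCard_zero, sum_singleton, Finset.prod_empty, mul_one]
  congr 1
  refine sum_congr rfl fun i hi => ?_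
  rw [Lagrange.eval_interpolate_at_node _ hx hi]

theorem exists_dividedDifference_eq {U : Set ℝ} (hU : U.OrdConnected) {F : ℕ → ℝ → ℝ}
    (hF : ∀ k, ∀ t ∈ U, HasDerivAt (F k) (F (k + 1) t) t) {ι : Type*} [DecidableEq ι]
    {s : Finset ι} {x : ι → ℝ} (hx : InjOn x s) (hxU : ∀ i ∈ s, x i ∈ U) {m : ℕ}
    (hs : #s = m + 1) :
    ∃ ξ ∈ U, dividedDifference s x (F 0) = F m ξ / m.factorial := by
  set P := Lagrange.interpolate s x (fun i => F 0 (x i))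
  set g : ℕ → ℝ → ℝ := fun k t => F k t - (Polynomial.derivative^[k] P).eval t
  have hg : ∀ k, ∀ t ∈ U, HasDerivAt (g k) (g (k + 1) t) t := fun k t ht => by
    refine (hF k t ht).sub ?_
    rw [Function.iterate_succ_apply']
    exact Polynomial.hasDerivAt _ t
  have hz : ∀ t ∈ s.image x, g 0 t = 0 := by
    intro t ht
    obtain ⟨i, hi, rfl⟩ := mem_image.mp ht
    change F 0 (x i) - P.eval (x i) = 0
    rw [Lagrange.eval_interpolate_at_node _ hx hi, sub_self]
  obtain ⟨ξ, hξU, hξ⟩ := exists_eq_zero_of_hasDerivAt_of_card_zeros hU hg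
    (by rw [card_image_of_injOn hx, hs]) (by simpa [Set.subset_def] using hxU) hz
  refine ⟨ξ, hξU, ?_⟩
  rw [sub_eq_zero.mp hξ, eval_iterate_derivative_interpolate hx hs]
  field_simp

theorem hasDerivAt_higherDeriv_affine_rpow {α β p t : ℝ} (ht : 0 < α + β * t) (k : ℕ) :
    HasDerivAt (fun t => β ^ k * (∏ j ∈ range k, (p - j)) * (α + β * t) ^ (p - k))
      (β ^ (k + 1) * (∏ j ∈ range (k + 1), (p - j)) * (α + β * t) ^ (p - (k + 1 : ℕ))) t := by
  have h := ((((hasDerivAt_id t).const_mul β).const_add α).rpow_const (p := p - k)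
    (Or.inl ht.ne')).const_mul (β ^ k * ∏ j ∈ range k, (p - j))
  refine h.congr_deriv ?_
  simp only [id, prod_range_succ]
  push_cast
  ring_nf

theorem exists_dividedDifference_affine_rpow_eq {α β p : ℝ} {U : Set ℝ} (hU : U.OrdConnected)
    (hUpos : ∀ t ∈ U, 0 < α + β * t) {ι : Type*} [DecidableEq ι] {s : Finset ι} {x : ι → ℝ}
    (hx : InjOn x s) (hxU : ∀ i ∈ s, x i ∈ U) {m : ℕ} (hs : #s = m + 1) :
    ∃ ξ ∈ U, dividedDifference s x (fun t => (α + β * t) ^ p) =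
      β ^ m * (∏ j ∈ range m, (p - j)) * (α + β * ξ) ^ (p - m) / m.factorial := by
  have hF := fun k t (ht : t ∈ U) => hasDerivAt_higherDeriv_affine_rpow (p := p) (hUpos t ht) k
  obtain ⟨ξ, hξU, hξ⟩ := exists_dividedDifference_eq hU hF hx hxU hs
  exact ⟨ξ, hξU, by simpa using hξ⟩

theorem sum_div_prod_sub_swap {ι : Type*} [DecidableEq ι] (s : Finset ι) (x : ι → ℝ)
    (f : ℝ → ℝ) {m : ℕ} (hs : #s = m + 1) :
    ∑ i ∈ s, f (x i) / ∏ j ∈ s.erase i, (x j - x i) = (-1) ^ m * dividedDifference s x f := by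
  rw [dividedDifference, mul_sum]
  refine sum_congr rfl fun i hi => ?_
  have hcard : #(s.erase i) = m := by rw [card_erase_of_mem hi, hs, Nat.add_sub_cancel]
  have hswap : ∏ j ∈ s.erase i, (x j - x i) = (-1) ^ m * ∏ j ∈ s.erase i, (x i - x j) := by
    rw [← hcard, ← prod_neg]
    simp only [neg_sub]
  rw [hswap, div_mul_eq_div_div_swap, div_eq_mul_inv _ ((-1) ^ m), ← inv_pow, inv_neg_one, mul_comm]

theorem rpow_neg_divided_difference_bounds (α β γ : ℝ) (hα : 0 < α) (hβ : 0 < β) (hγ : 0 < γ)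
    (f : ℝ → ℝ) (hfdef : ∀ x ∈ Set.Ioi (0 : ℝ), f x = (α + β * x) ^ (-γ))
    (n : ℕ) (hn : 1 ≤ n) (x : Fin n → ℝ) (hx : ∀ i, x i ∈ Set.Ioi (0 : ℝ))
    (hinj : Function.Injective x) :
    0 < ∑ i, f (x i) / ∏ j ∈ Finset.univ.erase i, (x j - x i) ∧
    ∑ i, f (x i) / ∏ j ∈ Finset.univ.erase i, (x j - x i) <
      α ^ (-(γ + n - 1)) * β ^ (n - 1) *
        (∏ k ∈ Finset.range (n - 1), (γ + k)) / (n - 1).factorial := by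
  obtain ⟨m, rfl⟩ : ∃ m, n = m + 1 := ⟨n - 1, by omega⟩
  obtain ⟨ξ, hξ : 0 < ξ, hmean⟩ :=
    exists_dividedDifference_affine_rpow_eq (α := α) (β := β) (p := -γ) ordConnected_Ioi
      (fun t (ht : 0 < t) => by positivity) hinj.injOn (fun i _ => hx i) (card_fin (m + 1))
  have hf : dividedDifference univ x f = dividedDifference univ x (fun t => (α + β * t) ^ (-γ)) :=
    sum_congr rfl fun i _ => by rw [hfdef _ (hx i)]
  have hprod : ∏ j ∈ range m, (-γ - j) = (-1) ^ m * ∏ j ∈ range m, (γ + j) := by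
    simp only [← neg_add', prod_neg, card_range]
  have hsign : (-1 : ℝ) ^ m * (-1) ^ m = 1 := by rw [← mul_pow]; simp
  set closedForm := (α + β * ξ) ^ (-γ - m) * β ^ m * (∏ j ∈ range m, (γ + j)) / m.factorial
  have hsum : ∑ i, f (x i) / ∏ j ∈ univ.erase i, (x j - x i) = closedForm := by
    rw [sum_div_prod_sub_swap _ _ _ (card_fin (m + 1)), hf, hmean, hprod]
    linear_combination closedForm * hsign
  simp only [Nat.add_sub_cancel, Nat.cast_add, Nat.cast_one]
  rw [hsum, show -(γ + (m + 1) - 1) = -γ - m by ring]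
  have hpow : (α + β * ξ) ^ (-γ - m) < α ^ (-γ - m) :=
    Real.rpow_lt_rpow_of_neg hα (lt_add_of_pos_right α (by positivity))
      (by linarith [m.cast_nonneg (α := ℝ)])
  refine ⟨by positivity, ?_⟩
  gcongr ?_ * _ * _ / _
end
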